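/- arXiv:1405.3860 — 11 statements merged into one kernel-verified Lean document; each statement's English description precedes it below -/
import Mathlib

section
/- There exists a spatial spectrum access game on a directed interference graph that does not admit any pure Nash equilibrium. Concretely: consider the game with three players 𝒩 = {1,2,3}, two channels ℳ = {1,2}, directed interference graph the 3-cycle with in-neighborhoods 𝒩_1 = {3}, 𝒩_2 = {1}, 𝒩_3 = {2}, and, for a fixed p ∈ (0,1), payoffs U_n(a) = p·∏_{i ∈ 𝒩_n : a_i = a_n} (1−p) for every channel profile a ∈ ℳ^3 (so U_n(a) = p(1−p) if player n's unique interferer chooses the same channel as n, and U_n(a) = p otherwise). This game has no pure Nash equilibrium: for each of the 8 profiles a some player n and channel m satisfy U_n(m, a_{−n}) > U_n(a). -/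
/-!
If some player shares a channel with its interferer, switching to another channel raises its
payoff from `p(1-p)` to `p`, so at an equilibrium every player avoids its interferer's channel.
On the directed 3-cycle any two distinct players are linked by an interference edge, but by
pigeonhole two of the three players share one of the two channels.
-/

section Conflict

variable {ι M : Type*} [DecidableEq ι] [DecidableEq M] [Nontrivial M] {p : ℝ} {nbr : ι → ι}
  {U : (ι → M) → ι → ℝ}

theorem exists_payoff_lt_of_conflict (hp : p ≠ 0)
    (hU : ∀ a n, U a n = p * (if a (nbr n) = a n then 1 - p else 1))
    {a : ι → M} {n : ι} (hnbr : nbr n ≠ n) (hconf : a (nbr n) = a n) :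
    ∃ m, U a n < U (Function.update a n m) n := by
  obtain ⟨m, hm⟩ := exists_ne (a n)
  refine ⟨m, ?_⟩
  have hfree : Function.update a n m (nbr n) ≠ Function.update a n m n := by
    rw [Function.update_of_ne hnbr, Function.update_self, hconf]
    exact hm.symm
  rw [hU, hU, if_pos hconf, if_neg hfree]
  nlinarith [sq_pos_of_ne_zero hp]

end Conflict

theorem Fin.three_cycle_adj {nbr : Fin 3 → Fin 3}
    (hn0 : nbr 0 = 2) (hn1 : nbr 1 = 0) (hn2 : nbr 2 = 1) {i j : Fin 3} (hij : i ≠ j) :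
    nbr i = j ∨ nbr j = i := by
  fin_cases i <;> fin_cases j <;> simp_all

theorem stmt_0_general (p : ℝ) (hp0 : 0 < p)
    (nbr : Fin 3 → Fin 3)
    (hn0 : nbr 0 = 2) (hn1 : nbr 1 = 0) (hn2 : nbr 2 = 1)
    (U : (Fin 3 → Fin 2) → Fin 3 → ℝ)
    (hU : ∀ (a : Fin 3 → Fin 2) (n : Fin 3),
      U a n = p * (if a (nbr n) = a n then 1 - p else 1)) :
    ¬ ∃ a : Fin 3 → Fin 2, ∀ (n : Fin 3) (m : Fin 2),
        U (Function.update a n m) n ≤ U a n := by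
  rintro ⟨a, hNash⟩
  obtain ⟨i, j, hij, hsame⟩ := Fintype.exists_ne_map_eq_of_card_lt a (by simp)
  have not_conflict : ∀ {n k}, nbr n = k → k ≠ n → a k ≠ a n := by
    rintro n k rfl hnbr hconf
    obtain ⟨m, hlt⟩ := exists_payoff_lt_of_conflict hp0.ne' hU hnbr hconf
    exact (hNash n m).not_gt hlt
  rcases Fin.three_cycle_adj hn0 hn1 hn2 hij with hi | hj
  · exact not_conflict hi hij.symm hsame.symm
  · exact not_conflict hj hij hsame

/-- The 3-player 2-channel spatial spectrum access game on the directed 3-cycle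
(in-neighborhoods `𝒩_0 = {2}`, `𝒩_1 = {0}`, `𝒩_2 = {1}`), with Aloha-type payoff
`U_n(a) = p·(1-p)` if player `n`'s unique interferer chooses the same channel and
`U_n(a) = p` otherwise, has no pure Nash equilibrium. -/
theorem stmt_0 (p : ℝ) (hp0 : 0 < p) (hp1 : p < 1)
    (nbr : Fin 3 → Fin 3)
    (hn0 : nbr 0 = 2) (hn1 : nbr 1 = 0) (hn2 : nbr 2 = 1)
    (U : (Fin 3 → Fin 2) → Fin 3 → ℝ)
    (hU : ∀ (a : Fin 3 → Fin 2) (n : Fin 3),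
      U a n = p * (if a (nbr n) = a n then 1 - p else 1)) :
    ¬ ∃ a : Fin 3 → Fin 2, ∀ (n : Fin 3) (m : Fin 2),
        U (Function.update a n m) n ≤ U a n :=
  stmt_0_general p hp0 nbr hn0 hn1 hn2 U hU
end

section
/- Let Γ be a spatial spectrum access game on players {1,…,N+1} whose directed interference graph satisfies: 𝒩_n ⊆ {1,…,N} for every n ≤ N (the new player N+1 cannot generate interference to any original player) and 𝒩_{N+1} ⊆ {1,…,N}. If the N-player spatial spectrum access game obtained by restricting to players {1,…,N} (with the same in-neighborhoods 𝒩_n, the same θ, B, g) has a pure Nash equilibrium, then Γ has a pure Nash equilibrium. (In particular, extending a pure Nash equilibrium a* of the restricted game by a best response a*_{N+1} ∈ argmax_{m∈ℳ} θ_m B_m^{N+1} g_{N+1}(𝒩_{N+1}^m(a*)) yields a pure Nash equilibrium of Γ.) -/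
/-!
Extend an equilibrium `b` of the restricted game by a best response `m₀` of the new player.
Since the new player lies in no in-neighborhood, each original player sees the same interference
in `Fin.snoc b m₀`, and in each of its unilateral deviations, as in the corresponding profile of
the restricted game; so its payoffs, and hence its incentives, are those of the restricted game.
-/

lemma Fin.filter_snoc_eq_filter_castSucc {N : ℕ} {α : Type*} [DecidableEq α]
    (S : Finset (Fin (N + 1))) (hS : ∀ i ∈ S, i ≠ Fin.last N) (b : Fin N → α) (x c : α) :
    S.filter (fun i => (Fin.snoc b x : Fin (N + 1) → α) i = c) =
      S.filter (fun i => ∃ j : Fin N, j.castSucc = i ∧ b j = c) := by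
  refine Finset.filter_congr fun i hi => ?_
  obtain ⟨j, rfl⟩ := Fin.exists_castSucc_eq.2 (hS i hi)
  simp only [Fin.snoc_castSucc, Fin.castSucc_inj, exists_eq_left]

theorem stmt_1_general (N M : ℕ)
    (𝒩 : Fin (N + 1) → Finset (Fin (N + 1)))
    (θ : Fin (M + 1) → ℝ) (B : Fin (M + 1) → Fin (N + 1) → ℝ)
    (g : Fin (N + 1) → Finset (Fin (N + 1)) → ℝ)
    -- the new player `Fin.last N` cannot generate interference to anyone:
    (hlast : ∀ n i, i ∈ 𝒩 n → i ≠ Fin.last N)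
    -- payoff of the full (N+1)-player game:
    (U : (Fin (N + 1) → Fin (M + 1)) → Fin (N + 1) → ℝ)
    (hU : ∀ a n, U a n = θ (a n) * B (a n) n *
      g n ((𝒩 n).filter (fun i => a i = a n)))
    -- payoff of the restricted N-player game (same 𝒩, θ, B, g):
    (Ur : (Fin N → Fin (M + 1)) → Fin N → ℝ)
    (hUr : ∀ b n, Ur b n = θ (b n) * B (b n) n.castSucc *
      g n.castSucc ((𝒩 n.castSucc).filter
        (fun i => ∃ j : Fin N, j.castSucc = i ∧ b j = b n)))
    -- the restricted game has a pure Nash equilibrium: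
    (hNE : ∃ b : Fin N → Fin (M + 1), ∀ (n : Fin N) (m : Fin (M + 1)),
      Ur (Function.update b n m) n ≤ Ur b n) :
    -- then the full game has a pure Nash equilibrium:
    ∃ a : Fin (N + 1) → Fin (M + 1), ∀ (n : Fin (N + 1)) (m : Fin (M + 1)),
      U (Function.update a n m) n ≤ U a n := by
  obtain ⟨b, hb⟩ := hNE
  have payoff_original (b' : Fin N → Fin (M + 1)) (x : Fin (M + 1)) (n : Fin N) :
      U (Fin.snoc b' x) n.castSucc = Ur b' n := by
    rw [hU, hUr, Fin.snoc_castSucc, Fin.filter_snoc_eq_filter_castSucc _ (hlast _)]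
  obtain ⟨m₀, -, hm₀⟩ := Finset.exists_max_image Finset.univ
    (fun x => U (Fin.snoc b x) (Fin.last N)) Finset.univ_nonempty
  refine ⟨Fin.snoc b m₀, fun n m => ?_⟩
  induction n using Fin.lastCases with
  | last => simpa only [Fin.update_snoc_last] using hm₀ m (Finset.mem_univ m)
  | cast n =>
    rw [← Fin.snoc_update, payoff_original, payoff_original]
    exact hb n m

/-- Adding to a spatial spectrum access game a new player (player `N+1`, here `Fin.last N`)
who cannot generate interference to any original player (no in-neighborhood of any player
contains the new player) but may receive interference from original players, preserves
the existence of a pure Nash equilibrium. -/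
theorem stmt_1 (N M : ℕ)
    (𝒩 : Fin (N + 1) → Finset (Fin (N + 1)))
    (θ : Fin (M + 1) → ℝ) (B : Fin (M + 1) → Fin (N + 1) → ℝ)
    (g : Fin (N + 1) → Finset (Fin (N + 1)) → ℝ)
    (hθ : ∀ m, 0 < θ m ∧ θ m < 1)
    (hB : ∀ m n, 0 < B m n)
    (hself : ∀ n, n ∉ 𝒩 n)
    (hg : ∀ n S, S ⊆ 𝒩 n → 0 < g n S ∧ g n S < 1)
    -- the new player `Fin.last N` cannot generate interference to anyone:
    (hlast : ∀ n i, i ∈ 𝒩 n → i ≠ Fin.last N)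
    -- payoff of the full (N+1)-player game:
    (U : (Fin (N + 1) → Fin (M + 1)) → Fin (N + 1) → ℝ)
    (hU : ∀ a n, U a n = θ (a n) * B (a n) n *
      g n ((𝒩 n).filter (fun i => a i = a n)))
    -- payoff of the restricted N-player game (same 𝒩, θ, B, g):
    (Ur : (Fin N → Fin (M + 1)) → Fin N → ℝ)
    (hUr : ∀ b n, Ur b n = θ (b n) * B (b n) n.castSucc *
      g n.castSucc ((𝒩 n.castSucc).filter
        (fun i => ∃ j : Fin N, j.castSucc = i ∧ b j = b n)))
    -- the restricted game has a pure Nash equilibrium: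
    (hNE : ∃ b : Fin N → Fin (M + 1), ∀ (n : Fin N) (m : Fin (M + 1)),
      Ur (Function.update b n m) n ≤ Ur b n) :
    -- then the full game has a pure Nash equilibrium:
    ∃ a : Fin (N + 1) → Fin (M + 1), ∀ (n : Fin (N + 1)) (m : Fin (M + 1)),
      U (Function.update a n m) n ≤ U a n :=
  stmt_1_general N M 𝒩 θ B g hlast U hU Ur hUr hNE
end

section
/- Any spatial spectrum access game whose directed interference graph is acyclic has a pure Nash equilibrium. That is, if the relation 'i ∈ 𝒩_j' admits no directed cycle (equivalently, there is a linear ordering of the players such that i ∈ 𝒩_j implies i precedes j), then for arbitrary channel idle probabilities θ_m ∈ (0,1), data rates B_m^n > 0, and channel grabbing functions g_n with values in (0,1), the game possesses a pure Nash equilibrium. -/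
/-! Order the players along the (well-founded) transitive closure of the interference relation.
Each player's payoff depends only on its own channel and on the channels of the players before it,
so choosing, player by player along that order, a best response to the choices already made
yields a profile in which nobody can gain by deviating. -/

open Function Relation

theorem wellFounded_transGen_of_acyclic {ι : Type*} [Finite ι] {r : ι → ι → Prop}
    (hr : ∀ i, ¬ TransGen r i i) : WellFounded (TransGen r) :=
  haveI : IsTrans ι (TransGen r) := ⟨fun _ _ _ => TransGen.trans⟩
  haveI : Std.Irrefl (TransGen r) := ⟨hr⟩
  Finite.wellFounded_of_trans_of_irrefl _

theorem exists_nash_of_wellFounded_dependence {ι α β : Type*} [DecidableEq ι] [Finite α]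
    [Nonempty α] [LinearOrder β] {R : ι → ι → Prop} (hR : WellFounded R) (U : (ι → α) → ι → β)
    (hU : ∀ a a' n, a n = a' n → (∀ i, R i n → a i = a' i) → U a n = U a' n) :
    ∃ a : ι → α, ∀ n m, U (update a n m) n ≤ U a n := by
  classical
  have hbest : ∀ n (v : ι → α), ∃ m, ∀ m', U (update v n m') n ≤ U (update v n m) n :=
    fun n v => Finite.exists_max fun m => U (update v n m) n
  choose bestResponse hbestResponse using hbest
  let before (n : ι) (rec : ∀ i, R i n → α) : ι → α :=
    fun i => if h : R i n then rec i h else Classical.arbitrary α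
  let a : ι → α := hR.fix fun n rec => bestResponse n (before n rec)
  let v (n : ι) : ι → α := before n fun i _ => a i
  have ha : ∀ n, a n = bestResponse n (v n) := fun n => hR.fix_eq _ n
  have hUv : ∀ n m, U (update a n m) n = U (update (v n) n m) n := by
    intro n m
    refine hU _ _ n (by simp) fun i hi => ?_
    have hin : i ≠ n := by rintro rfl; exact hR.irrefl.irrefl i hi
    simp [update_of_ne hin, v, before, hi]
  refine ⟨a, fun n m => ?_⟩
  calc U (update a n m) n = U (update (v n) n m) n := hUv n m
    _ ≤ U (update (v n) n (a n)) n := ha n ▸ hbestResponse n (v n) m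
    _ = U a n := by rw [← hUv, update_eq_self]

theorem stmt_2_general (N M : ℕ)
    (𝒩 : Fin (N + 1) → Finset (Fin (N + 1)))
    (θ : Fin (M + 1) → ℝ) (B : Fin (M + 1) → Fin (N + 1) → ℝ)
    (g : Fin (N + 1) → Finset (Fin (N + 1)) → ℝ)
    -- acyclicity: no directed cycle in the relation "i interferes with j"
    (hacyc : ∀ i : Fin (N + 1), ¬ Relation.TransGen (fun i j => i ∈ 𝒩 j) i i)
    (U : (Fin (N + 1) → Fin (M + 1)) → Fin (N + 1) → ℝ)
    (hU : ∀ a n, U a n = θ (a n) * B (a n) n *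
      g n ((𝒩 n).filter (fun i => a i = a n))) :
    ∃ a : Fin (N + 1) → Fin (M + 1), ∀ (n : Fin (N + 1)) (m : Fin (M + 1)),
      U (Function.update a n m) n ≤ U a n := by
  refine exists_nash_of_wellFounded_dependence (wellFounded_transGen_of_acyclic hacyc) U
    fun a a' n hn hpred => ?_
  have hneighbors : (𝒩 n).filter (fun i => a i = a n) = (𝒩 n).filter (fun i => a' i = a' n) :=
    Finset.filter_congr fun i hi => by rw [hpred i (TransGen.single hi), hn]
  rw [hU, hU, hneighbors, hn]

/-- Any spatial spectrum access game whose directed interference graph is acyclic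
(the relation `i ∈ 𝒩 j` admits no directed cycle) has a pure Nash equilibrium. -/
theorem stmt_2 (N M : ℕ)
    (𝒩 : Fin (N + 1) → Finset (Fin (N + 1)))
    (θ : Fin (M + 1) → ℝ) (B : Fin (M + 1) → Fin (N + 1) → ℝ)
    (g : Fin (N + 1) → Finset (Fin (N + 1)) → ℝ)
    (hθ : ∀ m, 0 < θ m ∧ θ m < 1)
    (hB : ∀ m n, 0 < B m n)
    (hself : ∀ n, n ∉ 𝒩 n)
    (hg : ∀ n S, S ⊆ 𝒩 n → 0 < g n S ∧ g n S < 1)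
    -- acyclicity: no directed cycle in the relation "i interferes with j"
    (hacyc : ∀ i : Fin (N + 1), ¬ Relation.TransGen (fun i j => i ∈ 𝒩 j) i i)
    (U : (Fin (N + 1) → Fin (M + 1)) → Fin (N + 1) → ℝ)
    (hU : ∀ a n, U a n = θ (a n) * B (a n) n *
      g n ((𝒩 n).filter (fun i => a i = a n))) :
    ∃ a : Fin (N + 1) → Fin (M + 1), ∀ (n : Fin (N + 1)) (m : Fin (M + 1)),
      U (Function.update a n m) n ≤ U a n :=
  stmt_2_general N M 𝒩 θ B g hacyc U hU
end

section
/- Any spatial spectrum access game satisfying the congestion property whose directed interference graph is a directed tree has a pure Nash equilibrium. Here the graph is a directed tree if the undirected graph obtained by ignoring edge directions (i adjacent to j iff i ∈ 𝒩_j or j ∈ 𝒩_i) is a tree, i.e., connected and acyclic. -/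
/-
Root the interference tree and solve the game by backward induction from the leaves. For a
player `i` and a channel `c` of its parent, `bestReply i c` is the best channel of `i` (ties
broken towards the smallest channel) when the parent sits on `c` and each child `j` of `i` answers
a choice `x` of `i` with `bestReply j x`. The congestion property makes these replies sticky: if
`bestReply i y = y`, then `bestReply i c = y` for every `c`, since moving the parent off `y` can
only raise the payoff of `y` and lower that of every other channel. Let every player play its
best reply to its parent's channel, from the root downwards. A player that deviates to `m` then
shares `m` with at least the neighbours counted by `bestReply` on `m`, while on its own channel it
meets exactly those counted there, so the deviation does not pay.
-/

/-- The undirected graph obtained from the directed interference graph by ignoring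
the directions of edges: `i` is adjacent to `j` iff `i ∈ 𝒩 j` or `j ∈ 𝒩 i`. -/
def stmt4UndirGraph {N : ℕ} (𝒩 : Fin N → Finset (Fin N)) : SimpleGraph (Fin N) where
  Adj i j := i ≠ j ∧ (i ∈ 𝒩 j ∨ j ∈ 𝒩 i)
  symm := ⟨fun i j h => ⟨h.1.symm, h.2.symm⟩⟩
  loopless := ⟨fun i h => h.1 rfl⟩

/-- The roots are the fixed points of `parent`. -/
structure RootedForest (V : Type*) [Fintype V] where
  parent : V → V
  depth : V → ℕ
  depth_lt_card : ∀ v, depth v < Fintype.card V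
  depth_parent_lt : ∀ v, parent v ≠ v → depth (parent v) < depth v

open Finset

namespace SimpleGraph

variable {V : Type*} [Fintype V] {G : SimpleGraph V}

theorem IsTree.exists_rootedForest (hG : G.IsTree) :
    ∃ F : RootedForest V, ∀ ⦃i j⦄, G.Adj i j → j = F.parent i ∨ i = F.parent j := by
  obtain ⟨r⟩ := hG.connected.nonempty
  -- the parent of `v` is the penultimate vertex of the path from the root `r` to `v`
  choose path hpath using fun v => (hG.existsUnique_path r v).exists
  refine ⟨⟨fun v => (path v).penultimate, fun v => (path v).length, fun v => (hpath v).length_lt,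
    fun v hv => ?_⟩, fun i j hij => ?_⟩
  · have hnil : ¬ (path v).Nil := fun hnil => hv (by
      rw [Walk.penultimate, hnil.length_eq_zero, Walk.getVert_zero, hnil.eq])
    have hconcat := hG.isAcyclic.path_concat (hpath _) (hpath v) (Walk.adj_penultimate hnil)
      (Walk.getVert_mem_support _ _)
    have hlen := congrArg Walk.length hconcat
    rw [Walk.length_concat] at hlen
    exact hlen ▸ Nat.lt_succ_self _
  · by_cases hj : j ∈ (path i).support
    · exact .inl (hG.isAcyclic.eq_penultimate_of_adj_end (hpath i) hij hj)
    · exact .inr (hG.isAcyclic.eq_penultimate_of_adj_end (hpath j) hij.symm <|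
        hG.isAcyclic.mem_support_of_ne_mem_support_of_adj_of_isPath (hpath j) (hpath i) hij.symm hj)

end SimpleGraph

section FirstArgmax

variable {C β : Type*} [Fintype C] [LinearOrder C] [Nonempty C] [LinearOrder β]

noncomputable def firstArgmax (f : C → β) : C :=
  (univ.filter fun x => ∀ y, f y ≤ f x).min' <| by
    simpa [Finset.filter_nonempty_iff] using Finite.exists_max f

theorem firstArgmax_eq_iff {f : C → β} {x : C} :
    firstArgmax f = x ↔ (∀ y, f y ≤ f x) ∧ ∀ y < x, f y < f x := by
  rw [firstArgmax, Finset.min'_eq_iff]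
  simp only [mem_filter, mem_univ, true_and]
  refine and_congr_right fun hx => ⟨fun h y hy => ?_, fun h y hy => ?_⟩
  · exact lt_of_le_of_ne (hx y) fun hyx => (h y (hyx ▸ hx ·)).not_gt hy
  · exact not_lt.1 fun hyx => (h y hyx).not_ge (hy x)

theorem apply_le_apply_firstArgmax (f : C → β) (y : C) : f y ≤ f (firstArgmax f) :=
  (firstArgmax_eq_iff.1 rfl).1 y

theorem firstArgmax_eq_of_le_of_forall_ne_le {f g : C → β} {x : C} (hfx : firstArgmax f = x)
    (hx : f x ≤ g x) (hg : ∀ y ≠ x, g y ≤ f y) : firstArgmax g = x := by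
  obtain ⟨hmax, hfirst⟩ := firstArgmax_eq_iff.1 hfx
  refine firstArgmax_eq_iff.2 ⟨fun y => ?_, fun y hy => ?_⟩
  · rcases eq_or_ne y x with rfl | hyx
    · rfl
    · exact (hg y hyx).trans ((hmax y).trans hx)
  · exact (hg y hy.ne).trans_lt ((hfirst y hy).trans_le hx)

end FirstArgmax

namespace InterferenceGame

open Function

section Payoff

variable {V C β : Type*} [DecidableEq V] [DecidableEq C] (𝒩 : V → Finset V)
  (u : V → C → Finset V → β)

def payoff (a : V → C) (n : V) : β :=
  u n (a n) ((𝒩 n).filter fun i => a i = a n)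

def HasCongestionProperty [LE β] : Prop :=
  ∀ n x S T, S ⊆ T → T ⊆ 𝒩 n → u n x T ≤ u n x S

def IsPureNashEq [LE β] (a : V → C) : Prop :=
  ∀ n m, payoff 𝒩 u (update a n m) n ≤ payoff 𝒩 u a n

variable {𝒩 u} in
theorem payoff_update_self (hself : ∀ n, n ∉ 𝒩 n) (a : V → C) (n : V) (m : C) :
    payoff 𝒩 u (update a n m) n = u n m ((𝒩 n).filter fun i => a i = m) := by
  rw [payoff, update_self]
  congr 1
  refine filter_congr fun i hi => ?_
  rw [update_of_ne (ne_of_mem_of_not_mem hi (hself n))]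

end Payoff

variable {V C β : Type*} [Fintype V] [DecidableEq V] [Fintype C] [LinearOrder C] [Nonempty C]
  [LinearOrder β] (𝒩 : V → Finset V) (u : V → C → Finset V → β) (F : RootedForest V)

noncomputable def bestReply (i : V) (c : C) : C :=
  -- The recursive call is kept out of the `filter` below: its decidability instance would
  -- otherwise contain the call without the guard that justifies termination.
  let childReply (j : V) (x : C) : C :=
    if _ : F.parent j = i ∧ j ≠ i then bestReply j x else x
  firstArgmax fun x => u i x ((𝒩 i).filter fun j =>
    if F.parent j = i ∧ j ≠ i then childReply j x = x else x = c ∧ j = F.parent i)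
termination_by Fintype.card V - F.depth i
decreasing_by
  obtain ⟨rfl, hne⟩ : F.parent j = i ∧ j ≠ i := ‹_›
  exact Nat.sub_lt_sub_left (F.depth_lt_card _) (F.depth_parent_lt _ hne.symm)

noncomputable def rivals (i : V) (c x : C) : Finset V :=
  (𝒩 i).filter fun j =>
    if F.parent j = i ∧ j ≠ i then bestReply 𝒩 u F j x = x else x = c ∧ j = F.parent i

theorem bestReply_eq (i : V) (c : C) :
    bestReply 𝒩 u F i c = firstArgmax fun x => u i x (rivals 𝒩 u F i c x) := by
  rw [bestReply]
  congr! 3 with x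
  refine filter_congr fun j _ => ?_
  split_ifs with h
  · simp only [dif_pos h]
  · rfl

noncomputable def profile (i : V) : C :=
  bestReply 𝒩 u F i <|
    if _ : F.parent i = i then Classical.arbitrary C else profile (F.parent i)
termination_by F.depth i
decreasing_by exact F.depth_parent_lt i ‹_›

theorem exists_profile_eq_bestReply (i : V) :
    ∃ c, profile 𝒩 u F i = bestReply 𝒩 u F i c ∧
      (F.parent i ≠ i → c = profile 𝒩 u F (F.parent i)) := by
  rw [profile]
  exact ⟨_, rfl, fun h => dif_neg h⟩

variable {𝒩 u F}

theorem profile_eq_bestReply_of_parent_eq {i j : V} (hj : F.parent j = i) (hji : j ≠ i) :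
    profile 𝒩 u F j = bestReply 𝒩 u F j (profile 𝒩 u F i) := by
  obtain ⟨c, hc, hc'⟩ := exists_profile_eq_bestReply 𝒩 u F j
  rw [hc, hc' (hj ▸ hji.symm), hj]

theorem rivals_subset_rivals {i : V} {c x : C} (hxc : x ≠ c) (c' : C) :
    rivals 𝒩 u F i c x ⊆ rivals 𝒩 u F i c' x := by
  refine monotone_filter_right _ fun j _ hj => ?_
  split_ifs at hj ⊢
  · exact hj
  · exact absurd hj.1 hxc

theorem bestReply_eq_of_bestReply_self (hu : HasCongestionProperty 𝒩 u) {i : V} {y : C} (hy : bestReply 𝒩 u F i y = y) (c : C) : bestReply 𝒩 u F i c = y := by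
  rcases eq_or_ne c y with rfl | hcy
  · exact hy
  rw [bestReply_eq] at hy ⊢
  refine firstArgmax_eq_of_le_of_forall_ne_le hy
    (hu _ _ _ _ (rivals_subset_rivals hcy.symm y) (filter_subset _ _))
    fun x hxy => hu _ _ _ _ (rivals_subset_rivals hxy c) (filter_subset _ _)

theorem profile_eq_of_mem_rivals (hu : HasCongestionProperty 𝒩 u)
    (hself : ∀ n, n ∉ 𝒩 n) {n j : V} {c x : C}
    (hc : F.parent n ≠ n → c = profile 𝒩 u F (F.parent n)) (hj : j ∈ rivals 𝒩 u F n c x) :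
    profile 𝒩 u F j = x := by
  obtain ⟨hjn, hj⟩ := mem_filter.1 hj
  split_ifs at hj with hchild
  · rw [profile_eq_bestReply_of_parent_eq hchild.1 hchild.2]
    exact bestReply_eq_of_bestReply_self hu hj _
  · obtain ⟨rfl, rfl⟩ := hj
    exact (hc (ne_of_mem_of_not_mem hjn (hself n))).symm

theorem mem_rivals_of_profile_eq (hself : ∀ n, n ∉ 𝒩 n)
    (hnbr : ∀ ⦃i j⦄, j ∈ 𝒩 i → j = F.parent i ∨ i = F.parent j) {n j : V} {c : C}
    (hc : F.parent n ≠ n → c = profile 𝒩 u F (F.parent n)) (hj : j ∈ 𝒩 n)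
    (hjn : profile 𝒩 u F j = profile 𝒩 u F n) : j ∈ rivals 𝒩 u F n c (profile 𝒩 u F n) := by
  refine mem_filter.2 ⟨hj, ?_⟩
  have hne : j ≠ n := ne_of_mem_of_not_mem hj (hself n)
  split_ifs with hchild
  · rw [← profile_eq_bestReply_of_parent_eq hchild.1 hchild.2, hjn]
  · have hpar : j = F.parent n := (hnbr hj).resolve_right fun h => hchild ⟨h.symm, hne⟩
    refine ⟨?_, hpar⟩
    rw [hc (hpar ▸ hne), ← hpar, hjn]

theorem isPureNashEq_profile (hu : HasCongestionProperty 𝒩 u)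
    (hself : ∀ n, n ∉ 𝒩 n) (hnbr : ∀ ⦃i j⦄, j ∈ 𝒩 i → j = F.parent i ∨ i = F.parent j) :
    IsPureNashEq 𝒩 u (profile 𝒩 u F) := by
  intro n m
  obtain ⟨c, hn, hc⟩ := exists_profile_eq_bestReply 𝒩 u F n
  rw [payoff_update_self hself, payoff]
  calc u n m ((𝒩 n).filter fun j => profile 𝒩 u F j = m)
      ≤ u n m (rivals 𝒩 u F n c m) :=
        hu _ _ _ _ (fun j hj => mem_filter.2 ⟨(mem_filter.1 hj).1,
          profile_eq_of_mem_rivals hu hself hc hj⟩) (filter_subset _ _)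
    _ ≤ u n (profile 𝒩 u F n) (rivals 𝒩 u F n c (profile 𝒩 u F n)) := by
        rw [hn, bestReply_eq]
        exact apply_le_apply_firstArgmax (fun x => u n x (rivals 𝒩 u F n c x)) m
    _ ≤ u n (profile 𝒩 u F n) ((𝒩 n).filter fun j => profile 𝒩 u F j = profile 𝒩 u F n) :=
        hu _ _ _ _ (fun j hj => mem_rivals_of_profile_eq hself hnbr hc (mem_filter.1 hj).1
          (mem_filter.1 hj).2) (filter_subset _ _)

end InterferenceGame

theorem stmt_4_general (N M : ℕ)
    (𝒩 : Fin (N + 1) → Finset (Fin (N + 1)))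
    (hself : ∀ n, n ∉ 𝒩 n)
    (htree : (stmt4UndirGraph 𝒩).IsTree)
    (θ : Fin (M + 1) → ℝ) (B : Fin (M + 1) → Fin (N + 1) → ℝ)
    (g : Fin (N + 1) → Finset (Fin (N + 1)) → ℝ)
    (hθ : ∀ m, 0 < θ m ∧ θ m < 1)
    (hB : ∀ m n, 0 < B m n)
    -- congestion property:
    (hCP : ∀ n S T, S ⊆ T → T ⊆ 𝒩 n → g n T ≤ g n S)
    (U : (Fin (N + 1) → Fin (M + 1)) → Fin (N + 1) → ℝ)
    (hU : ∀ a n, U a n = θ (a n) * B (a n) n *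
      g n ((𝒩 n).filter (fun i => a i = a n))) :
    ∃ a : Fin (N + 1) → Fin (M + 1), ∀ (n : Fin (N + 1)) (m : Fin (M + 1)),
      U (Function.update a n m) n ≤ U a n := by
  set u : Fin (N + 1) → Fin (M + 1) → Finset (Fin (N + 1)) → ℝ :=
    fun n x S => θ x * B x n * g n S
  have hu : InterferenceGame.HasCongestionProperty 𝒩 u := fun n x S T hST hT =>
    mul_le_mul_of_nonneg_left (hCP n S T hST hT) (mul_pos (hθ x).1 (hB x n)).le
  obtain ⟨F, hF⟩ := htree.exists_rootedForest
  have hnbr : ∀ ⦃i j⦄, j ∈ 𝒩 i → j = F.parent i ∨ i = F.parent j := fun i j hj =>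
    hF ⟨(ne_of_mem_of_not_mem hj (hself i)).symm, .inr hj⟩
  have hUu : U = InterferenceGame.payoff 𝒩 u := funext₂ hU
  exact ⟨InterferenceGame.profile 𝒩 u F, hUu ▸ InterferenceGame.isPureNashEq_profile hu hself hnbr⟩

/-- Any spatial spectrum access game satisfying the congestion property whose directed
interference graph is a directed tree (the underlying undirected graph is a tree)
has a pure Nash equilibrium. -/
theorem stmt_4 (N M : ℕ)
    (𝒩 : Fin (N + 1) → Finset (Fin (N + 1)))
    (hself : ∀ n, n ∉ 𝒩 n)
    (htree : (stmt4UndirGraph 𝒩).IsTree)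
    (θ : Fin (M + 1) → ℝ) (B : Fin (M + 1) → Fin (N + 1) → ℝ)
    (g : Fin (N + 1) → Finset (Fin (N + 1)) → ℝ)
    (hθ : ∀ m, 0 < θ m ∧ θ m < 1)
    (hB : ∀ m n, 0 < B m n)
    (hg : ∀ n S, S ⊆ 𝒩 n → 0 < g n S ∧ g n S < 1)
    -- congestion property:
    (hCP : ∀ n S T, S ⊆ T → T ⊆ 𝒩 n → g n T ≤ g n S)
    (U : (Fin (N + 1) → Fin (M + 1)) → Fin (N + 1) → ℝ)
    (hU : ∀ a n, U a n = θ (a n) * B (a n) n *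
      g n ((𝒩 n).filter (fun i => a i = a n))) :
    ∃ a : Fin (N + 1) → Fin (M + 1), ∀ (n : Fin (N + 1)) (m : Fin (M + 1)),
      U (Function.update a n m) n ≤ U a n :=
  stmt_4_general N M 𝒩 hself htree θ B g hθ hB hCP U hU
end

section
/- Consider the spatial spectrum access game on the complete undirected interference graph (𝒩_n = 𝒩∖{n} for all n) with the random backoff mechanism, so that player n's payoff under profile a is U_n(a) = θ_{a_n}·B_{a_n}^n·f(K_{a_n}(a) − 1), where K_m(a) = |{i ∈ 𝒩 : a_i = m}| is the number of players choosing channel m. Define Φ(a) = ∏_{n=1}^N θ_{a_n} B_{a_n}^n · ∏_{m=1}^M ∏_{c=0}^{K_m(a)−1} f(c) (empty products equal 1). Then for every player k, every profile a, and every channel m, with a' = (m, a_{−k}), it holds that ln Φ(a') − ln Φ(a) = ln U_k(a') − ln U_k(a). In particular Φ is an ordinal potential for the game, and the game has a pure Nash equilibrium. -/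
/-!
Peeling player `k` off the player product leaves the factor `θ_{a_k} B_{a_k}^k`, and peeling `k` off
the count of channel `a_k` leaves the last factor `f(K_{a_k}(a) - 1)` of that channel's product; so
`Φ(a) = U_k(a) · Ψ_k(a)` with `Ψ_k(a) > 0` depending only on the other players' choices. A deviation
of `k` therefore scales `Φ` and `U_k` by the same positive factor, which gives the log and sign
identities, and a maximiser of `Φ` is a pure Nash equilibrium.
-/

open Finset Function

lemma Real.sign_mul_of_pos_left {c : ℝ} (hc : 0 < c) (x : ℝ) : Real.sign (c * x) = Real.sign x := by
  rcases lt_trichotomy x 0 with hx | rfl | hx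
  · rw [Real.sign_of_neg hx, Real.sign_of_neg (mul_neg_of_pos_of_neg hc hx)]
  · rw [mul_zero]
  · rw [Real.sign_of_pos hx, Real.sign_of_pos (mul_pos hc hx)]

section MultiplicativePotential

variable {ι α : Type*} [DecidableEq ι]

def IsMultiplicativePotential (Φ : (ι → α) → ℝ) (U : (ι → α) → ι → ℝ) : Prop :=
  ∀ k a, ∃ c > 0, ∀ m, Φ (update a k m) = c * U (update a k m) k

namespace IsMultiplicativePotential

variable {Φ : (ι → α) → ℝ} {U : (ι → α) → ι → ℝ}

lemma exists_pos_eq_mul (hΦ : IsMultiplicativePotential Φ U) (k : ι) (a : ι → α) :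
    ∃ c > 0, Φ a = c * U a k ∧ ∀ m, Φ (update a k m) = c * U (update a k m) k := by
  obtain ⟨c, hc, h⟩ := hΦ k a
  exact ⟨c, hc, by simpa using h (a k), h⟩

lemma log_sub_log (hΦ : IsMultiplicativePotential Φ U) (hU : ∀ a k, 0 < U a k)
    (k : ι) (a : ι → α) (m : α) :
    Real.log (Φ (update a k m)) - Real.log (Φ a) =
      Real.log (U (update a k m) k) - Real.log (U a k) := by
  obtain ⟨c, hc, ha, hupd⟩ := hΦ.exists_pos_eq_mul k a
  rw [hupd, ha, Real.log_mul hc.ne' (hU _ _).ne', Real.log_mul hc.ne' (hU _ _).ne']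
  ring

lemma sign_sub (hΦ : IsMultiplicativePotential Φ U) (k : ι) (a : ι → α) (m : α) :
    Real.sign (Φ (update a k m) - Φ a) = Real.sign (U (update a k m) k - U a k) := by
  obtain ⟨c, hc, ha, hupd⟩ := hΦ.exists_pos_eq_mul k a
  rw [hupd, ha, ← mul_sub, Real.sign_mul_of_pos_left hc]

lemma exists_nash [Finite ι] [Finite α] [Nonempty α] (hΦ : IsMultiplicativePotential Φ U) :
    ∃ a : ι → α, ∀ k m, U (update a k m) k ≤ U a k := by
  obtain ⟨a, hmax⟩ := Finite.exists_max Φ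
  refine ⟨a, fun k m => ?_⟩
  obtain ⟨c, hc, ha, hupd⟩ := hΦ.exists_pos_eq_mul k a
  have := hmax (update a k m)
  rw [hupd, ha] at this
  exact le_of_mul_le_mul_left this hc

end IsMultiplicativePotential

end MultiplicativePotential

section Congestion

variable {ι α R : Type*} [Fintype ι] [DecidableEq α] [CommMonoid R]

def congestionPayoff (w : α → ι → R) (f : ℕ → R) (a : ι → α) (k : ι) : R :=
  w (a k) k * f (#{i | a i = a k} - 1)

lemma congestionPayoff_pos {w : α → ι → ℝ} {f : ℕ → ℝ} (hw : ∀ m n, 0 < w m n)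
    (hf : ∀ c, 0 < f c) (a : ι → α) (k : ι) : 0 < congestionPayoff w f a k :=
  mul_pos (hw _ _) (hf _)

variable [DecidableEq ι]

lemma card_filter_eq_card_filter_erase_add (a : ι → α) (k : ι) (m : α) :
    #{i | a i = m} = #{i ∈ univ.erase k | a i = m} + if a k = m then 1 else 0 := by
  rw [card_filter, card_filter, sum_erase_add _ _ (mem_univ k)]

lemma card_filter_erase_update (a : ι → α) (k : ι) (m m' : α) :
    #{i ∈ univ.erase k | update a k m i = m'} = #{i ∈ univ.erase k | a i = m'} := by
  congr 1
  exact filter_congr fun i hi => by rw [update_of_ne (ne_of_mem_erase hi)]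

variable [Fintype α]

lemma prod_prod_range_card_filter (f : ℕ → R) (a : ι → α) (k : ι) :
    ∏ m, ∏ c ∈ range #{i | a i = m}, f c =
      f (#{i | a i = a k} - 1) * ∏ m, ∏ c ∈ range #{i ∈ univ.erase k | a i = m}, f c := by
  have peel : ∀ m, ∏ c ∈ range #{i | a i = m}, f c =
      (if a k = m then f #{i ∈ univ.erase k | a i = m} else 1) *
        ∏ c ∈ range #{i ∈ univ.erase k | a i = m}, f c := by
    intro m
    rw [card_filter_eq_card_filter_erase_add a k m]
    split_ifs
    · rw [prod_range_succ, mul_comm]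
    · rw [add_zero, one_mul]
  rw [prod_congr rfl fun m _ => peel m, prod_mul_distrib, prod_ite_eq, if_pos (mem_univ _),
    card_filter_eq_card_filter_erase_add a k (a k), if_pos rfl, Nat.add_sub_cancel]

/-- Rosenthal's potential in multiplicative form. -/
def congestionPotential (w : α → ι → R) (f : ℕ → R) (a : ι → α) : R :=
  (∏ n, w (a n) n) * ∏ m, ∏ c ∈ range #{i | a i = m}, f c

def congestionCofactor (w : α → ι → R) (f : ℕ → R) (k : ι) (a : ι → α) : R :=
  (∏ n ∈ univ.erase k, w (a n) n) * ∏ m, ∏ c ∈ range #{i ∈ univ.erase k | a i = m}, f c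

variable (w : α → ι → R) (f : ℕ → R)

lemma congestionPotential_eq_payoff_mul_cofactor (a : ι → α) (k : ι) :
    congestionPotential w f a = congestionPayoff w f a k * congestionCofactor w f k a := by
  rw [congestionPotential, congestionPayoff, congestionCofactor, ← mul_prod_erase _ _ (mem_univ k),
    prod_prod_range_card_filter f a k]
  ac_rfl

lemma congestionCofactor_update (k : ι) (a : ι → α) (m : α) :
    congestionCofactor w f k (update a k m) = congestionCofactor w f k a := by
  simp only [congestionCofactor, card_filter_erase_update]
  congr 1
  exact prod_congr rfl fun n hn => by rw [update_of_ne (ne_of_mem_erase hn)]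

lemma congestionCofactor_pos {w : α → ι → ℝ} {f : ℕ → ℝ} (hw : ∀ m n, 0 < w m n)
    (hf : ∀ c, 0 < f c) (k : ι) (a : ι → α) : 0 < congestionCofactor w f k a :=
  mul_pos (prod_pos fun _ _ => hw _ _) (prod_pos fun _ _ => prod_pos fun _ _ => hf _)

theorem isMultiplicativePotential_congestionPotential {w : α → ι → ℝ} {f : ℕ → ℝ}
    (hw : ∀ m n, 0 < w m n) (hf : ∀ c, 0 < f c) :
    IsMultiplicativePotential (congestionPotential w f) (congestionPayoff w f) := fun k a =>
  ⟨congestionCofactor w f k a, congestionCofactor_pos hw hf k a, fun m => by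
    rw [congestionPotential_eq_payoff_mul_cofactor w f _ k, congestionCofactor_update, mul_comm]⟩

end Congestion

/-- The probability of grabbing the channel against `c` interferers under random backoff
with `L` mini-slots. -/
noncomputable def backoffGrabProb (L c : ℕ) : ℝ :=
  ∑ l ∈ Icc 1 L, (1 / (L : ℝ)) * (((L : ℝ) - (l : ℝ)) / (L : ℝ)) ^ c

lemma backoffGrabProb_pos {L : ℕ} (hL : 2 ≤ L) (c : ℕ) : 0 < backoffGrabProb L c := by
  have hL0 : (0 : ℝ) < L := by exact_mod_cast (by omega : 0 < L)
  refine sum_pos' (fun l hl => ?_) ⟨1, mem_Icc.2 ⟨le_rfl, by omega⟩, ?_⟩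
  · have hlL : (l : ℝ) ≤ L := by exact_mod_cast (mem_Icc.1 hl).2
    exact mul_nonneg (by positivity) (pow_nonneg (div_nonneg (by linarith) hL0.le) c)
  · have h1L : (1 : ℝ) < L := by exact_mod_cast (hL : 1 < L)
    exact mul_pos (by positivity) (pow_pos (div_pos (by push_cast; linarith) hL0) c)

/-- Random backoff on the complete undirected interference graph:
`Φ(a) = ∏ₙ θ_{aₙ} B_{aₙ}ⁿ · ∏ₘ ∏_{c=0}^{Kₘ(a)-1} f(c)` satisfies the exact
log-potential identity for unilateral deviations, hence is an ordinal potential,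
and the game has a pure Nash equilibrium. -/
theorem stmt_6 (N M lmax : ℕ) (hl : 2 ≤ lmax)
    (θ : Fin (M + 1) → ℝ) (B : Fin (M + 1) → Fin (N + 1) → ℝ)
    (hθ : ∀ m, 0 < θ m ∧ θ m < 1)
    (hB : ∀ m n, 0 < B m n)
    -- random backoff channel grabbing probability with c same-channel interferers:
    (f : ℕ → ℝ)
    (hf : ∀ c, f c = ∑ l ∈ Finset.Icc 1 lmax,
      (1 / (lmax : ℝ)) * (((lmax : ℝ) - (l : ℝ)) / (lmax : ℝ)) ^ c)
    -- number of players choosing channel m: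
    (K : Fin (M + 1) → (Fin (N + 1) → Fin (M + 1)) → ℕ)
    (hK : ∀ m a, K m a = (Finset.univ.filter (fun i => a i = m)).card)
    -- payoff on the complete graph (each player has K(aₙ, a) − 1 interferers):
    (U : (Fin (N + 1) → Fin (M + 1)) → Fin (N + 1) → ℝ)
    (hU : ∀ a n, U a n = θ (a n) * B (a n) n * f (K (a n) a - 1))
    (Φ : (Fin (N + 1) → Fin (M + 1)) → ℝ)
    (hΦ : ∀ a, Φ a = (∏ n, θ (a n) * B (a n) n) *
      ∏ m, ∏ c ∈ Finset.range (K m a), f c) :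
    (∀ (k : Fin (N + 1)) (a : Fin (N + 1) → Fin (M + 1)) (m : Fin (M + 1)),
      Real.log (Φ (Function.update a k m)) - Real.log (Φ a) =
        Real.log (U (Function.update a k m) k) - Real.log (U a k)) ∧
    (∀ (n : Fin (N + 1)) (a : Fin (N + 1) → Fin (M + 1)) (m : Fin (M + 1)),
      Real.sign (Φ (Function.update a n m) - Φ a) =
        Real.sign (U (Function.update a n m) n - U a n)) ∧
    ∃ a : Fin (N + 1) → Fin (M + 1), ∀ (n : Fin (N + 1)) (m : Fin (M + 1)),
      U (Function.update a n m) n ≤ U a n := by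
  have hf_pos : ∀ c, 0 < f c := fun c => hf c ▸ backoffGrabProb_pos hl c
  have hw : ∀ m n, 0 < θ m * B m n := fun m n => mul_pos (hθ m).1 (hB m n)
  have hΦ_eq : Φ = congestionPotential (fun m n => θ m * B m n) f :=
    funext fun a => by simp only [hΦ, hK, congestionPotential]
  have hU_eq : U = congestionPayoff (fun m n => θ m * B m n) f :=
    funext₂ fun a n => by rw [hU, hK, congestionPayoff]
  subst hΦ_eq hU_eq
  have hpot := isMultiplicativePotential_congestionPotential hw hf_pos
  exact ⟨hpot.log_sub_log (congestionPayoff_pos hw hf_pos), hpot.sign_sub, hpot.exists_nash⟩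
end

section
/- Consider a spatial spectrum access game on an undirected interference graph with user-specific transmission gains h_n > 0, common channel data rates B_m > 0, and the random backoff mechanism, so that player n's payoff under profile a is U_n(a) = h_n·θ_{a_n}·B_{a_n}·f(K_n^{a_n}(a)), where K_n^m(a) = |{i ∈ 𝒩_n : a_i = m}|. If the undirected interference graph is a complete bipartite graph (the players partition into two disjoint sets 𝒱_1, 𝒱_2 such that every player of 𝒱_1 is adjacent to every player of 𝒱_2 and there are no edges within either set) or a regular bipartite graph (a bipartite graph in which every player has the same degree), then the game has a pure Nash equilibrium. -/
/-!
Let `w m = θ m * B m` and let `m₁`, `m₂` be the best and second best channels for `w`. Since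
`f 0 = 1 ≥ f c`, a player alone on its channel gets the full weight of that channel. On a
bipartite graph put one side on `m₂` and the other side on `m₁`: nobody is contested, the
`m₁`-side already has the best possible payoff, and an `m₂`-player gains nothing by moving to
`m₁` exactly when `w m₁ * f (deg n) ≤ w m₂`. If this fails for some player on each side, then
everybody on `m₁` is an equilibrium instead. Both graph classes have constant degree on each
side, so "fails for some player of a side" is the same as "fails for all of them".
-/

open Finset Function

theorem backoffGrabProb_antitone (L : ℕ) : Antitone (backoffGrabProb L) := by
  intro c d hcd
  refine sum_le_sum fun l hl => ?_
  obtain ⟨hl1, hlL⟩ := mem_Icc.1 hl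
  have hL : (0 : ℝ) < L := by exact_mod_cast hl1.trans hlL
  have hlL' : (l : ℝ) ≤ L := by exact_mod_cast hlL
  have hq0 : 0 ≤ ((L : ℝ) - l) / L := div_nonneg (by linarith) hL.le
  have hq1 : ((L : ℝ) - l) / L ≤ 1 := (div_le_one hL).2 (by linarith [l.cast_nonneg (α := ℝ)])
  exact mul_le_mul_of_nonneg_left (pow_le_pow_of_le_one hq0 hq1 hcd) (by positivity)

theorem backoffGrabProb_zero {L : ℕ} (hL : L ≠ 0) : backoffGrabProb L 0 = 1 := by
  simp [backoffGrabProb, hL]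

theorem backoffGrabProb_le_one {L : ℕ} (hL : L ≠ 0) (c : ℕ) : backoffGrabProb L c ≤ 1 :=
  backoffGrabProb_zero hL ▸ backoffGrabProb_antitone L c.zero_le

def IsPureNash {ι κ : Type*} [DecidableEq ι] (U : (ι → κ) → ι → ℝ) (a : ι → κ) : Prop :=
  ∀ n m, U (update a n m) n ≤ U a n

section Game

variable {ι κ : Type*} [DecidableEq κ]

/-- The paper's `K_n^m(a)` is the cardinality of this set. -/
def interferers (𝒩 : ι → Finset ι) (a : ι → κ) (n : ι) (m : κ) : Finset ι :=
  (𝒩 n).filter (fun i => a i = m)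

def backoffPayoff (𝒩 : ι → Finset ι) (g : ι → ℝ) (w : κ → ℝ) (f : ℕ → ℝ) (a : ι → κ)
    (n : ι) : ℝ :=
  g n * w (a n) * f (interferers 𝒩 a n (a n)).card

def NoProfitableSwitch (𝒩 : ι → Finset ι) (w : κ → ℝ) (f : ℕ → ℝ) (a : ι → κ) : Prop :=
  ∀ n m, w m * f (interferers 𝒩 a n m).card ≤ w (a n) * f (interferers 𝒩 a n (a n)).card

theorem interferers_update_self [DecidableEq ι] {𝒩 : ι → Finset ι} {n : ι} (hn : n ∉ 𝒩 n)
    (a : ι → κ) (m m' : κ) : interferers 𝒩 (update a n m) n m' = interferers 𝒩 a n m' :=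
  filter_congr fun i hi => by rw [update_of_ne (ne_of_mem_of_not_mem hi hn)]

theorem isPureNash_backoffPayoff [DecidableEq ι] {𝒩 : ι → Finset ι} {g : ι → ℝ} {w : κ → ℝ}
    {f : ℕ → ℝ} {a : ι → κ} (hself : ∀ n, n ∉ 𝒩 n) (hg : ∀ n, 0 ≤ g n)
    (ha : NoProfitableSwitch 𝒩 w f a) : IsPureNash (backoffPayoff 𝒩 g w f) a := by
  intro n m
  have := mul_le_mul_of_nonneg_left (ha n m) (hg n)
  simp only [backoffPayoff, update_self, interferers_update_self (hself n)]
  linarith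

theorem interferers_eq_empty {𝒩 : ι → Finset ι} {a : ι → κ} {n : ι} {m : κ}
    (h : ∀ i ∈ 𝒩 n, a i ≠ m) : interferers 𝒩 a n m = ∅ :=
  filter_false_of_mem h

theorem interferers_eq_self {𝒩 : ι → Finset ι} {a : ι → κ} {n : ι} {m : κ}
    (h : ∀ i ∈ 𝒩 n, a i = m) : interferers 𝒩 a n m = 𝒩 n :=
  filter_true_of_mem h

variable {𝒩 : ι → Finset ι} {w : κ → ℝ} {f : ℕ → ℝ}

theorem noProfitableSwitch_const (hf0 : f 0 = 1) {m₁ : κ}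
    (h : ∀ n, ∀ m ≠ m₁, w m ≤ w m₁ * f (𝒩 n).card) :
    NoProfitableSwitch 𝒩 w f (fun _ => m₁) := by
  intro n m
  rw [interferers_eq_self fun _ _ => rfl]
  by_cases hm : m = m₁
  · rw [hm, interferers_eq_self fun _ _ => rfl]
  · rw [interferers_eq_empty fun _ _ h' => hm h'.symm, card_empty, hf0, mul_one]
    exact h n m hm

theorem noProfitableSwitch_twoChannel [DecidableEq ι] (hw : ∀ m, 0 ≤ w m) (hf0 : f 0 = 1)
    (hf1 : ∀ c, f c ≤ 1) {m₁ m₂ : κ} (hm₂₁ : m₂ ≠ m₁) (hm₁ : ∀ m, w m ≤ w m₁)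
    (hm₂ : ∀ m ≠ m₁, w m ≤ w m₂) {W : Finset ι} (hW : ∀ n, ∀ i ∈ 𝒩 n, (i ∈ W ↔ n ∉ W))
    (hdev : ∀ n ∈ W, w m₁ * f (𝒩 n).card ≤ w m₂) :
    NoProfitableSwitch 𝒩 w f (fun i => if i ∈ W then m₂ else m₁) := by
  set a : ι → κ := fun i => if i ∈ W then m₂ else m₁
  intro n m
  by_cases hn : n ∈ W
  · have hnb : ∀ i ∈ 𝒩 n, a i = m₁ := fun i hi => if_neg ((hW n i hi).not_left.2 hn)
    have han : a n = m₂ := if_pos hn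
    have hfree : interferers 𝒩 a n m₂ = ∅ :=
      interferers_eq_empty fun i hi => hnb i hi ▸ hm₂₁.symm
    rw [han, hfree, card_empty, hf0, mul_one]
    by_cases hm : m = m₁
    · rw [hm, interferers_eq_self hnb]
      exact hdev n hn
    · rw [interferers_eq_empty fun i hi => hnb i hi ▸ Ne.symm hm, card_empty, hf0, mul_one]
      exact hm₂ m hm
  · have hnb : ∀ i ∈ 𝒩 n, a i = m₂ := fun i hi => if_pos ((hW n i hi).2 hn)
    have han : a n = m₁ := if_neg hn
    have hfree : interferers 𝒩 a n m₁ = ∅ :=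
      interferers_eq_empty fun i hi => hnb i hi ▸ hm₂₁
    rw [han, hfree, card_empty, hf0, mul_one]
    exact (mul_le_of_le_one_right (hw m) (hf1 _)).trans (hm₁ m)

def IsBiregularBipartition (𝒩 : ι → Finset ι) (W : Finset ι) : Prop :=
  (∀ n, ∀ i ∈ 𝒩 n, (i ∈ W ↔ n ∉ W)) ∧ (∃ d, ∀ n ∈ W, (𝒩 n).card = d) ∧
    ∃ d, ∀ n ∉ W, (𝒩 n).card = d

theorem exists_noProfitableSwitch [Fintype ι] [DecidableEq ι] [Fintype κ] [Nonempty κ]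
    (hw : ∀ m, 0 ≤ w m) (hf0 : f 0 = 1) (hf1 : ∀ c, f c ≤ 1) {W : Finset ι}
    (hW : IsBiregularBipartition 𝒩 W) : ∃ a, NoProfitableSwitch 𝒩 w f a := by
  obtain ⟨hcross, ⟨d₁, hd₁⟩, ⟨d₂, hd₂⟩⟩ := hW
  obtain ⟨m₁, hm₁⟩ := Finite.exists_max w
  by_cases hsingle : ∀ m, m = m₁
  · exact ⟨_, noProfitableSwitch_const hf0 fun _ m hm => absurd (hsingle m) hm⟩
  obtain ⟨m, hm⟩ := not_forall.1 hsingle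
  obtain ⟨m₂, hm₂₁, hm₂⟩ : ∃ m₂ ≠ m₁, ∀ m ≠ m₁, w m ≤ w m₂ := by
    obtain ⟨m₂, hm₂mem, hm₂⟩ := (univ.erase m₁).exists_max_image w ⟨m, by simpa using hm⟩
    exact ⟨m₂, (mem_erase.1 hm₂mem).1, fun m hm => hm₂ m (by simpa using hm)⟩
  by_cases h₁ : w m₁ * f d₁ ≤ w m₂
  · exact ⟨_, noProfitableSwitch_twoChannel hw hf0 hf1 hm₂₁ hm₁ hm₂ hcross
      fun n hn => hd₁ n hn ▸ h₁⟩
  by_cases h₂ : w m₁ * f d₂ ≤ w m₂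
  · have hcross' : ∀ n, ∀ i ∈ 𝒩 n, (i ∈ Wᶜ ↔ n ∉ Wᶜ) := fun n i hi => by
      simpa only [mem_compl, not_not] using (iff_not_comm.1 (hcross n i hi)).symm
    exact ⟨_, noProfitableSwitch_twoChannel hw hf0 hf1 hm₂₁ hm₁ hm₂ hcross'
      fun n hn => hd₂ n (mem_compl.1 hn) ▸ h₂⟩
  refine ⟨_, noProfitableSwitch_const hf0 fun n m hm => (hm₂ m hm).trans ?_⟩
  by_cases hn : n ∈ W
  · exact hd₁ n hn ▸ (not_le.1 h₁).le
  · exact hd₂ n hn ▸ (not_le.1 h₂).le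

theorem mem_iff_notMem_of_bipartite {V₁ V₂ : Finset ι} (hd : Disjoint V₁ V₂)
    (hE : ∀ i j, i ∈ 𝒩 j → (i ∈ V₁ ∧ j ∈ V₂) ∨ (i ∈ V₂ ∧ j ∈ V₁)) :
    ∀ n, ∀ i ∈ 𝒩 n, (i ∈ V₁ ↔ n ∉ V₁) := by
  intro n i hi
  have hi₂ : i ∈ V₁ → i ∉ V₂ := fun h => disjoint_left.1 hd h
  have hn₂ : n ∈ V₁ → n ∉ V₂ := fun h => disjoint_left.1 hd h
  have := hE i n hi
  tauto

theorem isBiregularBipartition_of_complete [Fintype ι] [DecidableEq ι] {V₁ V₂ : Finset ι}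
    (hd : Disjoint V₁ V₂) (hcov : V₁ ∪ V₂ = univ)
    (hE : ∀ i j, i ∈ 𝒩 j ↔ (i ∈ V₁ ∧ j ∈ V₂) ∨ (i ∈ V₂ ∧ j ∈ V₁)) :
    IsBiregularBipartition 𝒩 V₁ := by
  refine ⟨mem_iff_notMem_of_bipartite hd fun i j => (hE i j).1, ⟨#V₂, fun n hn => ?_⟩,
    ⟨#V₁, fun n hn => ?_⟩⟩
  · have := disjoint_left.1 hd hn
    congr 1
    ext i
    rw [hE]
    tauto
  · have : n ∈ V₂ := (mem_union.1 (hcov ▸ mem_univ n)).resolve_left hn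
    congr 1
    ext i
    rw [hE]
    tauto

theorem isBiregularBipartition_of_regular {V₁ V₂ : Finset ι} (hd : Disjoint V₁ V₂)
    (hE : ∀ i j, i ∈ 𝒩 j → (i ∈ V₁ ∧ j ∈ V₂) ∨ (i ∈ V₂ ∧ j ∈ V₁)) {D : ℕ}
    (hD : ∀ n, (𝒩 n).card = D) : IsBiregularBipartition 𝒩 V₁ :=
  ⟨mem_iff_notMem_of_bipartite hd hE, ⟨D, fun n _ => hD n⟩, ⟨D, fun n _ => hD n⟩⟩

end Game

theorem stmt_7_general (N M lmax : ℕ) (hl : 2 ≤ lmax)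
    (𝒩 : Fin (N + 1) → Finset (Fin (N + 1)))
    (hself : ∀ n, n ∉ 𝒩 n)
    (θ : Fin (M + 1) → ℝ) (hθ : ∀ m, 0 < θ m ∧ θ m < 1)
    (B : Fin (M + 1) → ℝ) (hB : ∀ m, 0 < B m)
    (h : Fin (N + 1) → ℝ) (hh : ∀ n, 0 < h n)
    -- random backoff channel grabbing probability with c same-channel interferers:
    (f : ℕ → ℝ)
    (hf : ∀ c, f c = ∑ l ∈ Finset.Icc 1 lmax,
      (1 / (lmax : ℝ)) * (((lmax : ℝ) - (l : ℝ)) / (lmax : ℝ)) ^ c)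
    (U : (Fin (N + 1) → Fin (M + 1)) → Fin (N + 1) → ℝ)
    (hU : ∀ a n, U a n = h n * θ (a n) * B (a n) *
      f (((𝒩 n).filter (fun i => a i = a n)).card))
    -- the graph is complete bipartite or regular bipartite:
    (hbip :
      (∃ V1 V2 : Finset (Fin (N + 1)), Disjoint V1 V2 ∧ V1 ∪ V2 = Finset.univ ∧
        ∀ i j, i ∈ 𝒩 j ↔ ((i ∈ V1 ∧ j ∈ V2) ∨ (i ∈ V2 ∧ j ∈ V1))) ∨
      (∃ V1 V2 : Finset (Fin (N + 1)), Disjoint V1 V2 ∧ V1 ∪ V2 = Finset.univ ∧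
        (∀ i j, i ∈ 𝒩 j → ((i ∈ V1 ∧ j ∈ V2) ∨ (i ∈ V2 ∧ j ∈ V1))) ∧
        ∃ D : ℕ, ∀ n, (𝒩 n).card = D)) :
    ∃ a : Fin (N + 1) → Fin (M + 1), ∀ (n : Fin (N + 1)) (m : Fin (M + 1)),
      U (Function.update a n m) n ≤ U a n := by
  have hL : lmax ≠ 0 := by omega
  obtain rfl : f = backoffGrabProb lmax := funext hf
  obtain rfl : U = backoffPayoff 𝒩 h (fun m => θ m * B m) (backoffGrabProb lmax) := by
    funext a n
    simp only [hU, backoffPayoff, interferers, mul_assoc]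
  obtain ⟨W, hW⟩ : ∃ W, IsBiregularBipartition 𝒩 W := by
    rcases hbip with ⟨V₁, V₂, hd, hcov, hE⟩ | ⟨V₁, V₂, hd, -, hE, D, hD⟩
    exacts [⟨V₁, isBiregularBipartition_of_complete hd hcov hE⟩,
      ⟨V₁, isBiregularBipartition_of_regular hd hE hD⟩]
  obtain ⟨a, ha⟩ := exists_noProfitableSwitch (fun m => (mul_pos (hθ m).1 (hB m)).le)
    (backoffGrabProb_zero hL) (backoffGrabProb_le_one hL) hW
  exact ⟨a, isPureNash_backoffPayoff hself (fun n => (hh n).le) ha⟩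

/-- Random backoff spatial spectrum access game with user-specific transmission gains
on a complete bipartite or regular bipartite undirected interference graph has a
pure Nash equilibrium. -/
theorem stmt_7 (N M lmax : ℕ) (hl : 2 ≤ lmax)
    (𝒩 : Fin (N + 1) → Finset (Fin (N + 1)))
    (hself : ∀ n, n ∉ 𝒩 n)
    -- undirected interference graph:
    (hsym : ∀ i j, i ∈ 𝒩 j ↔ j ∈ 𝒩 i)
    (θ : Fin (M + 1) → ℝ) (hθ : ∀ m, 0 < θ m ∧ θ m < 1)
    (B : Fin (M + 1) → ℝ) (hB : ∀ m, 0 < B m)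
    (h : Fin (N + 1) → ℝ) (hh : ∀ n, 0 < h n)
    -- random backoff channel grabbing probability with c same-channel interferers:
    (f : ℕ → ℝ)
    (hf : ∀ c, f c = ∑ l ∈ Finset.Icc 1 lmax,
      (1 / (lmax : ℝ)) * (((lmax : ℝ) - (l : ℝ)) / (lmax : ℝ)) ^ c)
    (U : (Fin (N + 1) → Fin (M + 1)) → Fin (N + 1) → ℝ)
    (hU : ∀ a n, U a n = h n * θ (a n) * B (a n) *
      f (((𝒩 n).filter (fun i => a i = a n)).card))
    -- the graph is complete bipartite or regular bipartite:
    (hbip :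
      (∃ V1 V2 : Finset (Fin (N + 1)), Disjoint V1 V2 ∧ V1 ∪ V2 = Finset.univ ∧
        ∀ i j, i ∈ 𝒩 j ↔ ((i ∈ V1 ∧ j ∈ V2) ∨ (i ∈ V2 ∧ j ∈ V1))) ∨
      (∃ V1 V2 : Finset (Fin (N + 1)), Disjoint V1 V2 ∧ V1 ∪ V2 = Finset.univ ∧
        (∀ i j, i ∈ 𝒩 j → ((i ∈ V1 ∧ j ∈ V2) ∨ (i ∈ V2 ∧ j ∈ V1))) ∧
        ∃ D : ℕ, ∀ n, (𝒩 n).card = D)) :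
    ∃ a : Fin (N + 1) → Fin (M + 1), ∀ (n : Fin (N + 1)) (m : Fin (M + 1)),
      U (Function.update a n m) n ≤ U a n :=
  stmt_7_general N M lmax hl 𝒩 hself θ hθ B hB h hh f hf U hU hbip
end

section
/- Consider a spatial spectrum access game on an arbitrary undirected interference graph with the Aloha mechanism: each player n has contention probability p_n ∈ (0,1), and player n's payoff under profile a is U_n(a) = θ_{a_n}·B_{a_n}^n·p_n·∏_{i ∈ 𝒩_n^{a_n}(a)} (1 − p_i), where 𝒩_n^m(a) = {i ∈ 𝒩_n : a_i = m}. Then Φ(a) = Σ_{i=1}^N (−ln(1 − p_i))·( (1/2)·Σ_{j ∈ 𝒩_i^{a_i}(a)} ln(1 − p_j) + ln(θ_{a_i}·B_{a_i}^i·p_i) ) is an ordinal potential for the game, and consequently the game has a pure Nash equilibrium. -/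
/-!
Write `ℓᵢ = ln(1 - pᵢ) < 0`, so that `ln Uₙ(a) = ln(θ B p)ₙ + Sₙ(a)` with `Sₙ(a)` the sum of `ℓⱼ`
over the neighbours of `n` sharing its channel. The interaction part of `Φ` is
`-½ Σᵢ Σ_{j ∈ 𝒩ᵢ, aⱼ = aᵢ} ℓᵢ ℓⱼ`; since `ℓᵢ ℓⱼ` and the graph are symmetric, a deviation of player
`n` changes this double sum only in row and column `n`, i.e. twice its row. Hence `Φ` is an exact
weighted potential for `ln U` with weight `-ℓₙ > 0`, so an ordinal potential for `U`, and a
maximiser of `Φ` over the finite profile space is a pure Nash equilibrium.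
-/

open Finset Function

namespace Real

lemma sign_eq_sign_of_pos_iff_of_neg_iff {x y : ℝ} (hpos : 0 < x ↔ 0 < y) (hneg : x < 0 ↔ y < 0) :
    sign x = sign y := by
  rcases lt_trichotomy y 0 with hy | rfl | hy
  · rw [sign_of_neg (hneg.2 hy), sign_of_neg hy]
  · rw [le_antisymm (not_lt.1 (mt hpos.1 (lt_irrefl 0))) (not_lt.1 (mt hneg.1 (lt_irrefl 0)))]
  · rw [sign_of_pos (hpos.2 hy), sign_of_pos hy]

lemma pos_of_sign_pos {x : ℝ} (h : 0 < sign x) : 0 < x := by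
  by_contra hx
  rcases (not_lt.1 hx).lt_or_eq with hx | rfl
  · rw [sign_of_neg hx] at h
    norm_num at h
  · rw [sign_zero] at h
    exact lt_irrefl 0 h

end Real

lemma Fintype.sum_sum_eq_two_mul_sum_of_symm {ι R : Type*} [Fintype ι] [DecidableEq ι]
    [NonAssocSemiring R] (D : ι → ι → R) (n : ι) (hsymm : ∀ i j, D i j = D j i) (hnn : D n n = 0)
    (hoff : ∀ i j, i ≠ n → j ≠ n → D i j = 0) :
    ∑ i, ∑ j, D i j = 2 * ∑ j, D n j := by
  have hrow : ∀ i, ∑ j, D i j = D i n + if i = n then ∑ j, D n j else 0 := by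
    intro i
    split_ifs with hi
    · rw [hi, hnn, zero_add]
    · rw [Fintype.sum_eq_single n fun j hj => hoff i j hi hj, add_zero]
  rw [Fintype.sum_congr _ _ hrow, sum_add_distrib, Fintype.sum_ite_eq',
    Fintype.sum_congr _ _ fun i => hsymm i n, two_mul]

section Game

variable {ι α : Type*} [DecidableEq ι]

def IsOrdinalPotential (U : (ι → α) → ι → ℝ) (Φ : (ι → α) → ℝ) : Prop :=
  ∀ n a m, Real.sign (Φ (update a n m) - Φ a) = Real.sign (U (update a n m) n - U a n)

def IsPureNashEquilibrium (U : (ι → α) → ι → ℝ) (a : ι → α) : Prop :=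
  ∀ n m, U (update a n m) n ≤ U a n

theorem IsOrdinalPotential.exists_isPureNashEquilibrium [Finite ι] [Finite α] [Nonempty α]
    {U : (ι → α) → ι → ℝ} {Φ : (ι → α) → ℝ} (h : IsOrdinalPotential U Φ) :
    ∃ a, IsPureNashEquilibrium U a := by
  obtain ⟨a, ha⟩ := Finite.exists_max Φ
  refine ⟨a, fun n m => not_lt.1 fun hlt => ?_⟩
  have hsign : 0 < Real.sign (Φ (update a n m) - Φ a) := by
    rw [h, Real.sign_of_pos (sub_pos.2 hlt)]
    exact one_pos
  linarith [Real.pos_of_sign_pos hsign, ha (update a n m)]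

theorem isOrdinalPotential_of_sub_eq_mul_log_sub {U : (ι → α) → ι → ℝ} {Φ : (ι → α) → ℝ}
    (w : ι → ℝ) (hw : ∀ n, 0 < w n) (hU : ∀ a n, 0 < U a n)
    (h : ∀ n a m, Φ (update a n m) - Φ a =
      w n * (Real.log (U (update a n m) n) - Real.log (U a n))) :
    IsOrdinalPotential U Φ := by
  intro n a m
  rw [h]
  apply Real.sign_eq_sign_of_pos_iff_of_neg_iff
  · rw [mul_pos_iff_of_pos_left (hw n), sub_pos, sub_pos, Real.log_lt_log_iff (hU _ _) (hU _ _)]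
  · rw [← neg_pos, ← mul_neg, mul_pos_iff_of_pos_left (hw n), neg_pos, sub_neg, sub_neg,
      Real.log_lt_log_iff (hU _ _) (hU _ _)]

end Game

section Interference

variable {ι α : Type*} [Fintype ι] [DecidableEq ι] [DecidableEq α]
  (𝒩 : ι → Finset ι) (ℓ : ι → ℝ)

def sameChannelSum (a : ι → α) (i : ι) : ℝ :=
  ∑ j ∈ (𝒩 i).filter (fun j => a j = a i), ℓ j

lemma mul_sameChannelSum (a : ι → α) (i : ι) :
    ℓ i * sameChannelSum 𝒩 ℓ a i = ∑ j, if j ∈ 𝒩 i ∧ a j = a i then ℓ i * ℓ j else 0 := by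
  rw [sameChannelSum, mul_sum, sum_filter]
  simp only [ite_and, sum_ite_mem, univ_inter]

lemma sum_mul_sameChannelSum_update_sub (hself : ∀ n, n ∉ 𝒩 n)
    (hsym : ∀ i j, i ∈ 𝒩 j ↔ j ∈ 𝒩 i) (a : ι → α) (n : ι) (m : α) :
    ∑ i, ℓ i * sameChannelSum 𝒩 ℓ (update a n m) i - ∑ i, ℓ i * sameChannelSum 𝒩 ℓ a i =
      2 * (ℓ n * (sameChannelSum 𝒩 ℓ (update a n m) n - sameChannelSum 𝒩 ℓ a n)) := by
  simp only [mul_sameChannelSum, ← sum_sub_distrib]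
  rw [Fintype.sum_sum_eq_two_mul_sum_of_symm _ n, mul_sub, mul_sameChannelSum,
    mul_sameChannelSum, sum_sub_distrib]
  · intro i j
    congr 1 <;> exact if_congr (and_congr (hsym i j).symm eq_comm) (mul_comm _ _) rfl
  · simp [hself]
  · intro i j hi hj
    simp only [update_of_ne hi, update_of_ne hj, sub_self]

noncomputable def alohaPotential (c : ι → α → ℝ) (a : ι → α) : ℝ :=
  ∑ i, -ℓ i * (1 / 2 * sameChannelSum 𝒩 ℓ a i + c i (a i))

def alohaLogPayoff (c : ι → α → ℝ) (a : ι → α) (n : ι) : ℝ :=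
  c n (a n) + sameChannelSum 𝒩 ℓ a n

lemma alohaPotential_update_sub (c : ι → α → ℝ) (hself : ∀ n, n ∉ 𝒩 n)
    (hsym : ∀ i j, i ∈ 𝒩 j ↔ j ∈ 𝒩 i) (a : ι → α) (n : ι) (m : α) :
    alohaPotential 𝒩 ℓ c (update a n m) - alohaPotential 𝒩 ℓ c a =
      -ℓ n * (alohaLogPayoff 𝒩 ℓ c (update a n m) n - alohaLogPayoff 𝒩 ℓ c a n) := by
  have hsplit : ∀ b : ι → α, alohaPotential 𝒩 ℓ c b =
      -(1 / 2 * ∑ i, ℓ i * sameChannelSum 𝒩 ℓ b i) - ∑ i, ℓ i * c i (b i) := by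
    intro b
    simp only [alohaPotential, mul_sum, ← sum_neg_distrib, ← sum_sub_distrib]
    exact sum_congr rfl fun i _ => by ring
  have hown : ∑ i, ℓ i * c i (update a n m i) - ∑ i, ℓ i * c i (a i) =
      ℓ n * (c n m - c n (a n)) := by
    rw [← sum_sub_distrib, Fintype.sum_eq_single n fun i hi => by rw [update_of_ne hi, sub_self],
      update_self, mul_sub]
  rw [hsplit, hsplit, alohaLogPayoff, alohaLogPayoff, update_self]
  linear_combination (-1 / 2 : ℝ) * sum_mul_sameChannelSum_update_sub 𝒩 ℓ hself hsym a n m - hown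

end Interference

/-- Aloha spatial spectrum access game on an arbitrary undirected interference graph:
`Φ(a) = Σᵢ (−ln(1−pᵢ))·((1/2)·Σ_{j∈𝒩ᵢ^{aᵢ}(a)} ln(1−pⱼ) + ln(θ_{aᵢ} B_{aᵢ}ⁱ pᵢ))`
is an ordinal potential, and the game has a pure Nash equilibrium. -/
theorem stmt_11 (N M : ℕ)
    (𝒩 : Fin (N + 1) → Finset (Fin (N + 1)))
    (hself : ∀ n, n ∉ 𝒩 n)
    -- undirected interference graph:
    (hsym : ∀ i j, i ∈ 𝒩 j ↔ j ∈ 𝒩 i)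
    (θ : Fin (M + 1) → ℝ) (hθ : ∀ m, 0 < θ m ∧ θ m < 1)
    (B : Fin (M + 1) → Fin (N + 1) → ℝ) (hB : ∀ m n, 0 < B m n)
    (p : Fin (N + 1) → ℝ) (hp : ∀ n, 0 < p n ∧ p n < 1)
    (U : (Fin (N + 1) → Fin (M + 1)) → Fin (N + 1) → ℝ)
    (hU : ∀ a n, U a n = θ (a n) * B (a n) n * p n *
      ∏ i ∈ (𝒩 n).filter (fun i => a i = a n), (1 - p i))
    (Φ : (Fin (N + 1) → Fin (M + 1)) → ℝ)
    (hΦ : ∀ a, Φ a = ∑ i, (-(Real.log (1 - p i))) *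
      ((1 / 2) * (∑ j ∈ (𝒩 i).filter (fun j => a j = a i), Real.log (1 - p j)) +
        Real.log (θ (a i) * B (a i) i * p i))) :
    (∀ (n : Fin (N + 1)) (a : Fin (N + 1) → Fin (M + 1)) (m : Fin (M + 1)),
      Real.sign (Φ (Function.update a n m) - Φ a) =
        Real.sign (U (Function.update a n m) n - U a n)) ∧
    ∃ a : Fin (N + 1) → Fin (M + 1), ∀ (n : Fin (N + 1)) (m : Fin (M + 1)),
      U (Function.update a n m) n ≤ U a n := by
  set ℓ : Fin (N + 1) → ℝ := fun i => Real.log (1 - p i)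
  set c : Fin (N + 1) → Fin (M + 1) → ℝ := fun n k => Real.log (θ k * B k n * p n)
  have hgain : ∀ n k, 0 < θ k * B k n * p n := fun n k =>
    mul_pos (mul_pos (hθ k).1 (hB k n)) (hp n).1
  have hidle : ∀ i, 0 < 1 - p i := fun i => sub_pos.2 (hp i).2
  have hUpos : ∀ a n, 0 < U a n := fun a n => by
    rw [hU]
    exact mul_pos (hgain n (a n)) (prod_pos fun i _ => hidle i)
  have hlogU : ∀ a n, Real.log (U a n) = alohaLogPayoff 𝒩 ℓ c a n := fun a n => by
    rw [hU, Real.log_mul (hgain n (a n)).ne' (prod_pos fun i _ => hidle i).ne',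
      Real.log_prod fun i _ => (hidle i).ne']
    rfl
  have hpot : IsOrdinalPotential U Φ := by
    refine isOrdinalPotential_of_sub_eq_mul_log_sub (fun n => -ℓ n)
      (fun n => neg_pos.2 (Real.log_neg (hidle n) (by linarith [(hp n).1]))) hUpos
      fun n a m => ?_
    rw [hΦ, hΦ, hlogU, hlogU]
    exact alohaPotential_update_sub 𝒩 ℓ c hself hsym a n m
  exact ⟨hpot, hpot.exists_isPureNashEquilibrium⟩
end

section
/- In the setting of the Aloha spatial spectrum access game on an undirected interference graph with potential Φ(a) = Σ_{i=1}^N (−ln(1 − p_i))·( (1/2)·Σ_{j ∈ 𝒩_i^{a_i}(a)} ln(1 − p_j) + ln(θ_{a_i}·B_{a_i}^i·p_i) ), the following exact identity holds: for every player k, every profile a ∈ ℳ^N, and every channel m, with a' = (m, a_{−k}), Φ(a') − Φ(a) = (−ln(1 − p_k))·( ln U_k(a') − ln U_k(a) ). In particular, since −ln(1 − p_k) > 0, the game is a weighted potential game in the logarithms of the payoffs. -/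
/-!
Write `w j = log (1 - p j)` and `c ch i = log (θ ch * B ch i * p i)`. Then
`log U a k = c (a k) k + S a k`, where `S = sameChannelWeight 𝒩 w` gives the total weight `w j`
of the neighbours `j` of `k` sharing its channel. The potential is
`-∑ i, w i * (S a i / 2 + c (a i) i)`. Since the interference graph is undirected,
`∑ i, w i * S a i` is a symmetric double sum over same-channel edges, so a deviation of `k`
changes it by twice the change of the edges at `k`, that is by `2 * w k * ΔS k`; the factor `1/2`
cancels this doubling.
-/

open Finset Function

theorem Fintype.sum_sum_eq_of_eq_zero_off_cross {ι M : Type*} [Fintype ι] [DecidableEq ι]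
    [AddCommGroup M] (D : ι → ι → M) (k : ι) (hD : ∀ i j, i ≠ k → j ≠ k → D i j = 0) :
    ∑ i, ∑ j, D i j = ∑ j, D k j + ∑ i, D i k - D k k := by
  have hrow : ∀ i ∈ ({k}ᶜ : Finset ι), ∑ j, D i j = D i k := fun i hi =>
    Fintype.sum_eq_single k fun j hj => hD i j (by simpa using hi) hj
  have hcolumn := Fintype.sum_eq_add_sum_compl k fun i => D i k
  rw [Fintype.sum_eq_add_sum_compl k, Finset.sum_congr rfl hrow, hcolumn]
  abel

theorem Fintype.sum_apply_update_sub {ι α M : Type*} [Fintype ι] [DecidableEq ι]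
    [AddCommGroup M] (f : ι → α → M) (a : ι → α) (k : ι) (m : α) :
    ∑ i, f i (update a k m i) - ∑ i, f i (a i) = f k m - f k (a k) := by
  rw [← sum_sub_distrib, Fintype.sum_eq_single k fun i hi => by rw [update_of_ne hi, sub_self],
    update_self]

section SameChannel

variable {ι α : Type*} [DecidableEq ι] [DecidableEq α]
  (nbr : ι → Finset ι) (w : ι → ℝ)

def sameChannelWeight (a : ι → α) (i : ι) : ℝ :=
  ∑ j ∈ nbr i with a j = a i, w j

def sameChannelEdge (a : ι → α) (i j : ι) : ℝ :=
  if j ∈ nbr i ∧ a j = a i then w i * w j else 0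

variable {nbr w}

theorem mul_sameChannelWeight_eq_sum [Fintype ι] (a : ι → α) (i : ι) :
    w i * sameChannelWeight nbr w a i = ∑ j, sameChannelEdge nbr w a i j := by
  simp only [sameChannelWeight, sameChannelEdge, mul_sum, ite_and]
  rw [sum_filter, sum_ite_mem, univ_inter]

theorem sameChannelEdge_comm (hsym : ∀ i j, i ∈ nbr j ↔ j ∈ nbr i) (a : ι → α) (i j : ι) :
    sameChannelEdge nbr w a i j = sameChannelEdge nbr w a j i := by
  simp only [sameChannelEdge, hsym i j, eq_comm (a := a j), mul_comm (w i)]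

theorem sum_mul_sameChannelWeight_update_sub [Fintype ι] (hsym : ∀ i j, i ∈ nbr j ↔ j ∈ nbr i)
    (a : ι → α) (k : ι) (m : α) :
    ∑ i, w i * sameChannelWeight nbr w (update a k m) i - ∑ i, w i * sameChannelWeight nbr w a i =
      2 * (w k * (sameChannelWeight nbr w (update a k m) k - sameChannelWeight nbr w a k)) := by
  set D : ι → ι → ℝ := fun i j =>
    sameChannelEdge nbr w (update a k m) i j - sameChannelEdge nbr w a i j
  have hcross : ∀ i j, i ≠ k → j ≠ k → D i j = 0 := fun i j hi hj => by
    simp only [D, sameChannelEdge, update_of_ne hi, update_of_ne hj, sub_self]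
  have hcorner : D k k = 0 := by simp [D, sameChannelEdge]
  have hcolumn : ∑ i, D i k = ∑ j, D k j := sum_congr rfl fun i _ => by
    simp only [D, sameChannelEdge_comm hsym _ i k]
  calc _ = ∑ i, ∑ j, D i j := by
        simp only [D, mul_sameChannelWeight_eq_sum, sum_sub_distrib]
    _ = 2 * ∑ j, D k j := by
        rw [Fintype.sum_sum_eq_of_eq_zero_off_cross D k hcross, hcolumn, hcorner]; ring
    _ = _ := by simp only [D, sum_sub_distrib, mul_sameChannelWeight_eq_sum, mul_sub]

theorem potential_update_sub [Fintype ι] (hsym : ∀ i j, i ∈ nbr j ↔ j ∈ nbr i) (c : α → ι → ℝ)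
    (a : ι → α) (k : ι) (m : α) :
    ∑ i, w i * ((1 / 2) * sameChannelWeight nbr w (update a k m) i + c (update a k m i) i) -
        ∑ i, w i * ((1 / 2) * sameChannelWeight nbr w a i + c (a i) i) =
      w k * ((c m k + sameChannelWeight nbr w (update a k m) k) -
        (c (a k) k + sameChannelWeight nbr w a k)) := by
  have hS := sum_mul_sameChannelWeight_update_sub (w := w) hsym a k m
  have hc := Fintype.sum_apply_update_sub (fun i ch => w i * c ch i) a k m
  simp only [mul_add, sum_add_distrib, mul_left_comm (w _) (1 / 2), ← mul_sum] at hc ⊢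
  linear_combination (1 / 2) * hS + hc

end SameChannel

theorem stmt_12_general (N M : ℕ)
    (𝒩 : Fin (N + 1) → Finset (Fin (N + 1)))
    -- undirected interference graph:
    (hsym : ∀ i j, i ∈ 𝒩 j ↔ j ∈ 𝒩 i)
    (θ : Fin (M + 1) → ℝ) (hθ : ∀ m, 0 < θ m ∧ θ m < 1)
    (B : Fin (M + 1) → Fin (N + 1) → ℝ) (hB : ∀ m n, 0 < B m n)
    (p : Fin (N + 1) → ℝ) (hp : ∀ n, 0 < p n ∧ p n < 1)
    (U : (Fin (N + 1) → Fin (M + 1)) → Fin (N + 1) → ℝ)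
    (hU : ∀ a n, U a n = θ (a n) * B (a n) n * p n *
      ∏ i ∈ (𝒩 n).filter (fun i => a i = a n), (1 - p i))
    (Φ : (Fin (N + 1) → Fin (M + 1)) → ℝ)
    (hΦ : ∀ a, Φ a = ∑ i, (-(Real.log (1 - p i))) *
      ((1 / 2) * (∑ j ∈ (𝒩 i).filter (fun j => a j = a i), Real.log (1 - p j)) +
        Real.log (θ (a i) * B (a i) i * p i))) :
    ∀ (k : Fin (N + 1)) (a : Fin (N + 1) → Fin (M + 1)) (m : Fin (M + 1)),
      Φ (Function.update a k m) - Φ a =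
        (-(Real.log (1 - p k))) *
          (Real.log (U (Function.update a k m) k) - Real.log (U a k)) := by
  intro k a m
  set w : Fin (N + 1) → ℝ := fun j => Real.log (1 - p j)
  set c : Fin (M + 1) → Fin (N + 1) → ℝ := fun ch i => Real.log (θ ch * B ch i * p i)
  have hlogU : ∀ b n, Real.log (U b n) = c (b n) n + sameChannelWeight 𝒩 w b n := by
    intro b n
    have hq : ∀ i, 1 - p i ≠ 0 := fun i => by linarith [(hp i).2]
    have hfactor : θ (b n) * B (b n) n * p n ≠ 0 := by
      have := (hθ (b n)).1; have := hB (b n) n; have := (hp n).1; positivity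
    rw [hU, Real.log_mul hfactor (prod_ne_zero_iff.mpr fun i _ => hq i),
      Real.log_prod fun i _ => hq i]
    rfl
  have hΦw : ∀ b, Φ b = -∑ i, w i * ((1 / 2) * sameChannelWeight 𝒩 w b i + c (b i) i) := by
    intro b
    simp only [hΦ, neg_mul, sum_neg_distrib]
    rfl
  rw [hΦw, hΦw, hlogU, hlogU, update_self, ← neg_sub', potential_update_sub hsym c a k m]
  ring

/-- Exact weighted-potential identity for the Aloha spatial spectrum access game on an
undirected interference graph: for a unilateral deviation of player `k`,
`Φ(a') − Φ(a) = (−ln(1−p_k))·(ln U_k(a') − ln U_k(a))`. -/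
theorem stmt_12 (N M : ℕ)
    (𝒩 : Fin (N + 1) → Finset (Fin (N + 1)))
    (hself : ∀ n, n ∉ 𝒩 n)
    -- undirected interference graph:
    (hsym : ∀ i j, i ∈ 𝒩 j ↔ j ∈ 𝒩 i)
    (θ : Fin (M + 1) → ℝ) (hθ : ∀ m, 0 < θ m ∧ θ m < 1)
    (B : Fin (M + 1) → Fin (N + 1) → ℝ) (hB : ∀ m n, 0 < B m n)
    (p : Fin (N + 1) → ℝ) (hp : ∀ n, 0 < p n ∧ p n < 1)
    (U : (Fin (N + 1) → Fin (M + 1)) → Fin (N + 1) → ℝ)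
    (hU : ∀ a n, U a n = θ (a n) * B (a n) n * p n *
      ∏ i ∈ (𝒩 n).filter (fun i => a i = a n), (1 - p i))
    (Φ : (Fin (N + 1) → Fin (M + 1)) → ℝ)
    (hΦ : ∀ a, Φ a = ∑ i, (-(Real.log (1 - p i))) *
      ((1 / 2) * (∑ j ∈ (𝒩 i).filter (fun j => a j = a i), Real.log (1 - p j)) +
        Real.log (θ (a i) * B (a i) i * p i))) :
    ∀ (k : Fin (N + 1)) (a : Fin (N + 1) → Fin (M + 1)) (m : Fin (M + 1)),
      Φ (Function.update a k m) - Φ a =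
        (-(Real.log (1 - p k))) *
          (Real.log (U (Function.update a k m) k) - Real.log (U a k)) :=
  stmt_12_general N M 𝒩 hsym θ hθ B hB p hp U hU Φ hΦ
end

section
/- Consider a spatial spectrum access game satisfying the congestion property, and let V_n = max_{m ∈ ℳ} θ_m·B_m^n. Then for every pure Nash equilibrium ã of the game, Σ_{n ∈ 𝒩} U_n(ã) ≥ ( min_{n ∈ 𝒩} { V_n·g_n(𝒩_n) } / max_{n ∈ 𝒩} V_n ) · max_{a ∈ ℳ^N} Σ_{n ∈ 𝒩} U_n(a). In particular, the price of anarchy of the game (the ratio of the worst-case Nash equilibrium total throughput to the maximal total throughput) is at least min_n{V_n g_n(𝒩_n)}/max_n V_n. -/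
/-!
At an equilibrium no player gains by moving to its best channel `m`; there, by the congestion
property, it still grabs the channel with probability at least `g_n(𝒩_n)`, so its equilibrium
payoff is at least `V_n g_n(𝒩_n) ≥ min_k V_k g_k(𝒩_k)`. Conversely, in any profile each payoff
is at most `V_n ≤ max_k V_k`, since `g_n ≤ 1`. Summing both bounds over the players gives the
ratio.
-/

open Finset

theorem inf'_div_sup'_mul_sup'_sum_le_sum {ι α : Type*} [Fintype ι] [Nonempty ι]
    [Fintype α] [Nonempty α] {V c u : ι → ℝ} {U : α → ι → ℝ}
    (hV : ∀ i, 0 < V i) (hc : ∀ i, 0 ≤ c i)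
    (hUV : ∀ a i, U a i ≤ V i) (hcu : ∀ i, c i ≤ u i) :
    univ.inf' univ_nonempty c / univ.sup' univ_nonempty V *
        univ.sup' univ_nonempty (fun a => ∑ i, U a i) ≤ ∑ i, u i := by
  set cMin := univ.inf' univ_nonempty c
  set VMax := univ.sup' univ_nonempty V
  have hVMax : 0 < VMax := (hV (Classical.arbitrary ι)).trans_le (le_sup' V (mem_univ _))
  have hcMin : 0 ≤ cMin := le_inf' _ _ fun i _ => hc i
  have hopt : univ.sup' univ_nonempty (fun a => ∑ i, U a i) ≤ Fintype.card ι * VMax :=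
    sup'_le _ _ fun a _ => calc
      ∑ i, U a i ≤ ∑ _i : ι, VMax :=
        sum_le_sum fun i _ => (hUV a i).trans (le_sup' V (mem_univ i))
      _ = Fintype.card ι * VMax := by simp
  have hequil : Fintype.card ι * cMin ≤ ∑ i, u i := calc
    Fintype.card ι * cMin = ∑ _i : ι, cMin := by simp
    _ ≤ ∑ i, u i := sum_le_sum fun i _ => (inf'_le c (mem_univ i)).trans (hcu i)
  calc cMin / VMax * univ.sup' univ_nonempty (fun a => ∑ i, U a i)
      ≤ cMin / VMax * (Fintype.card ι * VMax) :=
        mul_le_mul_of_nonneg_left hopt (div_nonneg hcMin hVMax.le)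
    _ = Fintype.card ι * cMin := by field_simp
    _ ≤ ∑ i, u i := hequil

section SpectrumAccessGame

variable {ι κ : Type*} [Fintype κ] [Nonempty κ] [DecidableEq κ]
  {nbhd : ι → Finset ι} {rate : κ → ι → ℝ} {g : ι → Finset ι → ℝ} {U : (ι → κ) → ι → ℝ}

theorem payoff_le_sup'_rate (hrate : ∀ m n, 0 ≤ rate m n)
    (hg : ∀ n S, S ⊆ nbhd n → g n S ≤ 1)
    (hU : ∀ a n, U a n = rate (a n) n * g n ((nbhd n).filter fun i => a i = a n))
    (a : ι → κ) (n : ι) :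
    U a n ≤ univ.sup' univ_nonempty (fun m => rate m n) := by
  rw [hU]
  exact (mul_le_of_le_one_right (hrate _ n) (hg n _ (filter_subset _ _))).trans
    (le_sup' (fun m => rate m n) (mem_univ _))

theorem sup'_rate_mul_le_payoff_of_isNash [DecidableEq ι] (hrate : ∀ m n, 0 ≤ rate m n)
    (hCP : ∀ n S T, S ⊆ T → T ⊆ nbhd n → g n T ≤ g n S)
    (hU : ∀ a n, U a n = rate (a n) n * g n ((nbhd n).filter fun i => a i = a n))
    {a : ι → κ} (hNE : ∀ n m, U (Function.update a n m) n ≤ U a n) (n : ι) :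
    univ.sup' univ_nonempty (fun m => rate m n) * g n (nbhd n) ≤ U a n := by
  obtain ⟨m, -, hm⟩ := exists_mem_eq_sup' univ_nonempty (fun m => rate m n)
  calc univ.sup' univ_nonempty (fun m => rate m n) * g n (nbhd n)
      = rate m n * g n (nbhd n) := by rw [hm]
    _ ≤ rate m n * g n ((nbhd n).filter fun i => Function.update a n m i = m) :=
        mul_le_mul_of_nonneg_left (hCP n _ _ (filter_subset _ _) subset_rfl) (hrate m n)
    _ = U (Function.update a n m) n := by rw [hU, Function.update_self]
    _ ≤ U a n := hNE n m

end SpectrumAccessGame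

theorem stmt_13_general (N M : ℕ)
    (𝒩 : Fin (N + 1) → Finset (Fin (N + 1)))
    (θ : Fin (M + 1) → ℝ) (hθ : ∀ m, 0 < θ m ∧ θ m < 1)
    (B : Fin (M + 1) → Fin (N + 1) → ℝ) (hB : ∀ m n, 0 < B m n)
    (g : Fin (N + 1) → Finset (Fin (N + 1)) → ℝ)
    (hg : ∀ n S, S ⊆ 𝒩 n → 0 < g n S ∧ g n S < 1)
    -- congestion property:
    (hCP : ∀ n S T, S ⊆ T → T ⊆ 𝒩 n → g n T ≤ g n S)
    (U : (Fin (N + 1) → Fin (M + 1)) → Fin (N + 1) → ℝ)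
    (hU : ∀ a n, U a n = θ (a n) * B (a n) n *
      g n ((𝒩 n).filter (fun i => a i = a n)))
    (V : Fin (N + 1) → ℝ)
    (hV : ∀ n, V n = Finset.univ.sup' Finset.univ_nonempty (fun m => θ m * B m n)) :
    ∀ atil : Fin (N + 1) → Fin (M + 1),
      (∀ (n : Fin (N + 1)) (m : Fin (M + 1)),
        U (Function.update atil n m) n ≤ U atil n) →
      (Finset.univ.inf' Finset.univ_nonempty (fun n => V n * g n (𝒩 n))) /
          (Finset.univ.sup' Finset.univ_nonempty (fun n => V n)) *
          (Finset.univ.sup' Finset.univ_nonempty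
            (fun a : Fin (N + 1) → Fin (M + 1) => ∑ n, U a n)) ≤
        ∑ n, U atil n := by
  intro atil hNE
  have hrate_pos : ∀ m n, 0 < θ m * B m n := fun m n => mul_pos (hθ m).1 (hB m n)
  have hrate : ∀ m n, 0 ≤ θ m * B m n := fun m n => (hrate_pos m n).le
  have hVpos : ∀ n, 0 < V n := fun n => by
    rw [hV]
    exact (hrate_pos 0 n).trans_le (le_sup' (fun m => θ m * B m n) (mem_univ 0))
  refine inf'_div_sup'_mul_sup'_sum_le_sum hVpos
    (fun n => mul_nonneg (hVpos n).le (hg n _ subset_rfl).1.le) (fun a n => ?_) (fun n => ?_)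
  · rw [hV]
    exact payoff_le_sup'_rate hrate (fun n S hS => (hg n S hS).2.le) hU a n
  · rw [hV]
    exact sup'_rate_mul_le_payoff_of_isNash hrate hCP hU hNE n

/-- Price of anarchy bound for spatial spectrum access games satisfying the congestion
property: with `V_n = max_m θ_m B_m^n`, every pure Nash equilibrium `ã` satisfies
`Σₙ Uₙ(ã) ≥ (minₙ V_n g_n(𝒩_n) / maxₙ V_n) · max_a Σₙ Uₙ(a)`. -/
theorem stmt_13 (N M : ℕ)
    (𝒩 : Fin (N + 1) → Finset (Fin (N + 1)))
    (hself : ∀ n, n ∉ 𝒩 n)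
    (θ : Fin (M + 1) → ℝ) (hθ : ∀ m, 0 < θ m ∧ θ m < 1)
    (B : Fin (M + 1) → Fin (N + 1) → ℝ) (hB : ∀ m n, 0 < B m n)
    (g : Fin (N + 1) → Finset (Fin (N + 1)) → ℝ)
    (hg : ∀ n S, S ⊆ 𝒩 n → 0 < g n S ∧ g n S < 1)
    -- congestion property:
    (hCP : ∀ n S T, S ⊆ T → T ⊆ 𝒩 n → g n T ≤ g n S)
    (U : (Fin (N + 1) → Fin (M + 1)) → Fin (N + 1) → ℝ)
    (hU : ∀ a n, U a n = θ (a n) * B (a n) n *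
      g n ((𝒩 n).filter (fun i => a i = a n)))
    (V : Fin (N + 1) → ℝ)
    (hV : ∀ n, V n = Finset.univ.sup' Finset.univ_nonempty (fun m => θ m * B m n)) :
    ∀ atil : Fin (N + 1) → Fin (M + 1),
      (∀ (n : Fin (N + 1)) (m : Fin (M + 1)),
        U (Function.update atil n m) n ≤ U atil n) →
      (Finset.univ.inf' Finset.univ_nonempty (fun n => V n * g n (𝒩 n))) /
          (Finset.univ.sup' Finset.univ_nonempty (fun n => V n)) *
          (Finset.univ.sup' Finset.univ_nonempty
            (fun a : Fin (N + 1) → Fin (M + 1) => ∑ n, U a n)) ≤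
        ∑ n, U atil n :=
  stmt_13_general N M 𝒩 θ hθ B hB g hg hCP U hU V hV
end

section
/- For the distributed learning dynamics of a spatial spectrum access game, if the maximum in-degree satisfies max_{n∈𝒩}|𝒩_n| ≥ 1 and the temperature satisfies γ < 1 / ( 2·max_{m∈ℳ, n∈𝒩}{θ_m B_m^n}·max_{n∈𝒩}|𝒩_n| ), then the map Q is a maximum-norm contraction: for all perception matrices P, P̂ ∈ ℝ^{𝒩×ℳ}, max_{n∈𝒩, m∈ℳ} |Q_m^n(P) − Q_m^n(P̂)| ≤ 2γ·(max_{m,n} θ_m B_m^n)·(max_n |𝒩_n|)·max_{n,m} |P_m^n − P̂_m^n|, where the contraction constant 2γ·(max_{m,n} θ_m B_m^n)·(max_n |𝒩_n|) is strictly less than 1. -/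
/-!
`Q^n_m(P)` is `θ_m B^n_m` times the expectation of `g_n` over a random subset of `𝒩_n` that
contains each `i` independently with probability `σ^i_m(P)`. This expectation is affine in each
probability with slope in `[-1, 1]`, hence 1-Lipschitz for the `ℓ¹` distance of the probability
vectors. Each Boltzmann probability moves by at most `2γ ‖P - P̂‖_∞`: after clearing denominators
this follows termwise from `|eᵘ - eᵛ| ≤ |u - v| (eᵘ + eᵛ) / 2` (the logarithmic mean is at most
the arithmetic mean). Summing over the at most `D` neighbours gives the constant `2γCD`.
-/

open Finset Real

theorem mul_lt_one_of_lt_one_div {γ x : ℝ} (hγ : 0 < γ) (h : γ < 1 / x) : γ * x < 1 := by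
  rcases le_or_gt x 0 with hx | hx
  · nlinarith
  · exact (lt_div_iff₀ hx).1 h

theorem two_mul_exp_sub_one_le {t : ℝ} (ht : 0 ≤ t) : 2 * (exp t - 1) ≤ t * (exp t + 1) := by
  have hmono : Monotone fun s => s * (exp s + 1) - 2 * (exp s - 1) := by
    refine monotone_of_deriv_nonneg (by fun_prop) fun s => ?_
    have hderiv : HasDerivAt (fun s => s * (exp s + 1) - 2 * (exp s - 1))
        (1 * (exp s + 1) + s * exp s - 2 * exp s) s :=
      ((hasDerivAt_id s).mul ((hasDerivAt_exp s).add_const 1)).sub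
        (((hasDerivAt_exp s).sub_const 1).const_mul 2) |>.congr_deriv (by simp)
    rw [hderiv.deriv]
    -- the derivative is `1 - (1 - s) eˢ`, and `1 - s ≤ e⁻ˢ`
    have := mul_le_mul_of_nonneg_right (one_sub_le_exp_neg s) (exp_pos s).le
    rw [← exp_add, neg_add_cancel, exp_zero] at this
    linarith
  simpa using hmono ht

theorem exp_sub_exp_le_of_le {u v : ℝ} (h : v ≤ u) :
    exp u - exp v ≤ (u - v) * (exp u + exp v) / 2 := by
  have key := mul_le_mul_of_nonneg_left (two_mul_exp_sub_one_le (sub_nonneg.2 h)) (exp_pos v).le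
  rw [exp_sub] at key
  field_simp at key
  linarith

theorem abs_exp_sub_exp_le (u v : ℝ) : |exp u - exp v| ≤ |u - v| * (exp u + exp v) / 2 := by
  rcases le_total v u with h | h
  · rw [abs_of_nonneg (sub_nonneg.2 (exp_le_exp.2 h)), abs_of_nonneg (sub_nonneg.2 h)]
    exact exp_sub_exp_le_of_le h
  · rw [abs_of_nonpos (sub_nonpos.2 (exp_le_exp.2 h)), abs_of_nonpos (sub_nonpos.2 h), add_comm]
    linarith [exp_sub_exp_le_of_le h]

noncomputable def softmax {ι : Type*} [Fintype ι] (a : ι → ℝ) (m : ι) : ℝ :=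
  exp (a m) / ∑ k, exp (a k)

section Softmax

variable {ι : Type*} [Fintype ι]

theorem sum_exp_pos (a : ι → ℝ) (m : ι) : 0 < ∑ k, exp (a k) :=
  sum_pos (fun _ _ => exp_pos _) ⟨m, mem_univ m⟩

theorem softmax_mem_Icc (a : ι → ℝ) (m : ι) : softmax a m ∈ Set.Icc 0 1 :=
  ⟨div_nonneg (exp_pos _).le (sum_exp_pos a m).le,
    div_le_one_of_le₀ (single_le_sum (fun k _ => (exp_pos (a k)).le) (mem_univ m))
      (sum_exp_pos a m).le⟩

theorem abs_softmax_sub_softmax_le {a b : ι → ℝ} {K : ℝ} (hK : ∀ k, |a k - b k| ≤ K) (m : ι) :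
    |softmax a m - softmax b m| ≤ 2 * K := by
  set A := ∑ k, exp (a k)
  set B := ∑ k, exp (b k)
  have hA : 0 < A := sum_exp_pos a m
  have hB : 0 < B := sum_exp_pos b m
  have hnum : exp (a m) * B - A * exp (b m) = ∑ k, (exp (a m + b k) - exp (b m + a k)) := by
    simp only [sum_sub_distrib, exp_add, ← mul_sum, A, B, mul_comm _ (exp (b m))]
  have hterm : ∀ k, |exp (a m + b k) - exp (b m + a k)| ≤ K * (exp (a m + b k) + exp (b m + a k)) := by
    intro k
    have hdiff : |(a m + b k) - (b m + a k)| ≤ 2 * K := by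
      calc |(a m + b k) - (b m + a k)| = |(a m - b m) - (a k - b k)| := by ring_nf
        _ ≤ |a m - b m| + |a k - b k| := abs_sub _ _
        _ ≤ 2 * K := by linarith [hK m, hK k]
    calc _ ≤ |(a m + b k) - (b m + a k)| * (exp (a m + b k) + exp (b m + a k)) / 2 :=
          abs_exp_sub_exp_le _ _
      _ ≤ 2 * K * (exp (a m + b k) + exp (b m + a k)) / 2 := by gcongr
      _ = _ := by ring
  have hbound : |exp (a m) * B - A * exp (b m)| ≤ K * (exp (a m) * B + exp (b m) * A) := by
    rw [hnum]
    calc _ ≤ ∑ k, |exp (a m + b k) - exp (b m + a k)| := abs_sum_le_sum_abs _ _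
      _ ≤ ∑ k, K * (exp (a m + b k) + exp (b m + a k)) := sum_le_sum fun k _ => hterm k
      _ = _ := by simp only [← mul_sum, sum_add_distrib, exp_add, A, B]
  have hsa : softmax a m = exp (a m) / A := rfl
  have hsb : softmax b m = exp (b m) / B := rfl
  calc |softmax a m - softmax b m| ≤ K * (softmax a m + softmax b m) := by
        rw [hsa, hsb, div_sub_div _ _ hA.ne' hB.ne', abs_div, abs_of_pos (mul_pos hA hB),
          div_le_iff₀ (mul_pos hA hB)]
        refine hbound.trans_eq ?_
        field_simp
    _ ≤ K * (1 + 1) := by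
        have hK0 : 0 ≤ K := (abs_nonneg _).trans (hK m)
        gcongr
        exacts [(softmax_mem_Icc a m).2, (softmax_mem_Icc b m).2]
    _ = 2 * K := by ring

theorem abs_softmax_const_mul_sub_le {γ : ℝ} (hγ : 0 ≤ γ) {a b : ι → ℝ} {K : ℝ}
    (hK : ∀ k, |a k - b k| ≤ K) (m : ι) :
    |softmax (fun k => γ * a k) m - softmax (fun k => γ * b k) m| ≤ 2 * γ * K := by
  rw [mul_assoc]
  refine abs_softmax_sub_softmax_le (fun k => ?_) m
  rw [← mul_sub, abs_mul, abs_of_nonneg hγ]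
  exact mul_le_mul_of_nonneg_left (hK k) hγ

end Softmax

def randomSubsetExpectation {ι : Type*} [DecidableEq ι] (A : Finset ι) (x : ι → ℝ)
    (f : Finset ι → ℝ) : ℝ :=
  ∑ S ∈ A.powerset, f S * (∏ i ∈ S, x i) * ∏ i ∈ A \ S, (1 - x i)

section RandomSubsetExpectation

variable {ι : Type*} [DecidableEq ι] {A s : Finset ι} {a : ι} {x y : ι → ℝ} {f : Finset ι → ℝ}

@[simp]
theorem randomSubsetExpectation_empty : randomSubsetExpectation ∅ x f = f ∅ := by
  simp [randomSubsetExpectation]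

theorem randomSubsetExpectation_insert (ha : a ∉ s) :
    randomSubsetExpectation (insert a s) x f =
      (1 - x a) * randomSubsetExpectation s x f +
        x a * randomSubsetExpectation s x (fun S => f (insert a S)) := by
  simp only [randomSubsetExpectation, sum_powerset_insert ha, mul_sum]
  congr 1
  · refine sum_congr rfl fun S hS => ?_
    have haS : a ∉ S := fun h => ha (mem_powerset.1 hS h)
    rw [insert_sdiff_of_notMem _ haS, prod_insert (by simp [ha])]
    ring
  · refine sum_congr rfl fun S hS => ?_
    have haS : a ∉ S := fun h => ha (mem_powerset.1 hS h)
    rw [insert_sdiff_insert, sdiff_insert_of_notMem ha, prod_insert haS]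
    ring

theorem randomSubsetExpectation_mem_Icc (hx : ∀ i ∈ A, x i ∈ Set.Icc 0 1)
    (hf : ∀ S ⊆ A, f S ∈ Set.Icc 0 1) : randomSubsetExpectation A x f ∈ Set.Icc 0 1 := by
  induction A using Finset.induction_on generalizing f with
  | empty => simpa using hf ∅ subset_rfl
  | @insert a s ha ih =>
    have hxs : ∀ i ∈ s, x i ∈ Set.Icc 0 1 := fun i hi => hx i (mem_insert_of_mem hi)
    have hxa := hx a (mem_insert_self a s)
    rw [randomSubsetExpectation_insert ha]
    exact convex_Icc 0 1
      (ih hxs fun S hS => hf S (hS.trans (subset_insert a s)))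
      (ih hxs fun S hS => hf _ (insert_subset_insert a hS))
      (sub_nonneg.2 hxa.2) hxa.1 (sub_add_cancel 1 (x a))

theorem abs_randomSubsetExpectation_sub_le (hx : ∀ i ∈ A, x i ∈ Set.Icc 0 1)
    (hy : ∀ i ∈ A, y i ∈ Set.Icc 0 1) (hf : ∀ S ⊆ A, f S ∈ Set.Icc 0 1) :
    |randomSubsetExpectation A x f - randomSubsetExpectation A y f| ≤ ∑ i ∈ A, |x i - y i| := by
  induction A using Finset.induction_on generalizing f with
  | empty => simp
  | @insert a s ha ih =>
    have hxs : ∀ i ∈ s, x i ∈ Set.Icc 0 1 := fun i hi => hx i (mem_insert_of_mem hi)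
    have hys : ∀ i ∈ s, y i ∈ Set.Icc 0 1 := fun i hi => hy i (mem_insert_of_mem hi)
    obtain ⟨hxa₀, hxa₁⟩ := hx a (mem_insert_self a s)
    have hf₀ : ∀ S ⊆ s, f S ∈ Set.Icc 0 1 := fun S hS => hf S (hS.trans (subset_insert a s))
    have hf₁ : ∀ S ⊆ s, f (insert a S) ∈ Set.Icc 0 1 := fun S hS =>
      hf _ (insert_subset_insert a hS)
    rw [randomSubsetExpectation_insert ha, randomSubsetExpectation_insert ha, sum_insert ha]
    set E₀x := randomSubsetExpectation s x f
    set E₀y := randomSubsetExpectation s y f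
    set E₁x := randomSubsetExpectation s x (fun S => f (insert a S))
    set E₁y := randomSubsetExpectation s y (fun S => f (insert a S))
    have h₀ : |E₀x - E₀y| ≤ ∑ i ∈ s, |x i - y i| := ih hxs hys hf₀
    have h₁ : |E₁x - E₁y| ≤ ∑ i ∈ s, |x i - y i| := ih hxs hys hf₁
    obtain ⟨hE₀y₀, hE₀y₁⟩ := randomSubsetExpectation_mem_Icc hys hf₀
    obtain ⟨hE₁y₀, hE₁y₁⟩ := randomSubsetExpectation_mem_Icc hys hf₁
    have hgap : |E₁y - E₀y| ≤ 1 := abs_sub_le_of_nonneg_of_le hE₁y₀ hE₁y₁ hE₀y₀ hE₀y₁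
    calc |(1 - x a) * E₀x + x a * E₁x - ((1 - y a) * E₀y + y a * E₁y)|
        = |(1 - x a) * (E₀x - E₀y) + x a * (E₁x - E₁y) + (x a - y a) * (E₁y - E₀y)| := by
          ring_nf
      _ ≤ (1 - x a) * |E₀x - E₀y| + x a * |E₁x - E₁y| + |x a - y a| * |E₁y - E₀y| := by
          refine (abs_add_three _ _ _).trans_eq ?_
          rw [abs_mul, abs_mul, abs_mul, abs_of_nonneg (sub_nonneg.2 hxa₁), abs_of_nonneg hxa₀]
      _ ≤ (1 - x a) * ∑ i ∈ s, |x i - y i| + x a * ∑ i ∈ s, |x i - y i| + |x a - y a| * 1 := by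
          have := sub_nonneg.2 hxa₁
          gcongr
      _ = |x a - y a| + ∑ i ∈ s, |x i - y i| := by ring

end RandomSubsetExpectation

theorem stmt_14_general (N M : ℕ) (γ : ℝ) (hγ : 0 < γ)
    (𝒩 : Fin (N + 1) → Finset (Fin (N + 1)))
    (θ : Fin (M + 1) → ℝ) (hθ : ∀ m, 0 < θ m ∧ θ m < 1)
    (B : Fin (M + 1) → Fin (N + 1) → ℝ) (hB : ∀ m n, 0 < B m n)
    (g : Fin (N + 1) → Finset (Fin (N + 1)) → ℝ)
    (hg : ∀ n S, S ⊆ 𝒩 n → 0 < g n S ∧ g n S < 1)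
    -- Boltzmann mixed strategies generated from perceptions:
    (σ : (Fin (N + 1) → Fin (M + 1) → ℝ) → Fin (N + 1) → Fin (M + 1) → ℝ)
    (hσ : ∀ P i m, σ P i m = Real.exp (γ * P i m) / ∑ m', Real.exp (γ * P i m'))
    -- expected payoff of player n choosing channel m given perceptions P:
    (Q : (Fin (N + 1) → Fin (M + 1) → ℝ) → Fin (N + 1) → Fin (M + 1) → ℝ)
    (hQ : ∀ P n m, Q P n m = θ m * B m n * ∑ S ∈ (𝒩 n).powerset,
      g n S * (∏ i ∈ S, σ P i m) * ∏ i ∈ 𝒩 n \ S, (1 - σ P i m))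
    -- the maxima:
    (C : ℝ) (hC : C = Finset.univ.sup' Finset.univ_nonempty
      (fun q : Fin (M + 1) × Fin (N + 1) => θ q.1 * B q.1 q.2))
    (D : ℕ) (hD : D = Finset.univ.sup' Finset.univ_nonempty (fun n => (𝒩 n).card))
    (hγlt : γ < 1 / (2 * C * (D : ℝ))) :
    2 * γ * C * (D : ℝ) < 1 ∧
    ∀ P Phat : Fin (N + 1) → Fin (M + 1) → ℝ, ∀ (n : Fin (N + 1)) (m : Fin (M + 1)),
      |Q P n m - Q Phat n m| ≤ 2 * γ * C * (D : ℝ) *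
        Finset.univ.sup' Finset.univ_nonempty
          (fun q : Fin (N + 1) × Fin (M + 1) => |P q.1 q.2 - Phat q.1 q.2|) := by
  refine ⟨by linarith [mul_lt_one_of_lt_one_div hγ hγlt], fun P Phat n m => ?_⟩
  set K := univ.sup' univ_nonempty fun q : Fin (N + 1) × Fin (M + 1) => |P q.1 q.2 - Phat q.1 q.2|
  have hPK : ∀ i k, |P i k - Phat i k| ≤ K := fun i k =>
    le_sup' (fun q : Fin (N + 1) × Fin (M + 1) => |P q.1 q.2 - Phat q.1 q.2|) (mem_univ (i, k))
  have hσ_softmax : ∀ P i, σ P i m = softmax (fun k => γ * P i k) m := fun P i => hσ P i m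
  have hσ_mem : ∀ P i, σ P i m ∈ Set.Icc 0 1 := fun P i => hσ_softmax P i ▸ softmax_mem_Icc _ m
  have hσ_lip : ∀ i, |σ P i m - σ Phat i m| ≤ 2 * γ * K := fun i => by
    simpa only [hσ_softmax] using abs_softmax_const_mul_sub_le hγ.le (hPK i) m
  have hQ_expect : ∀ P, Q P n m = θ m * B m n * randomSubsetExpectation (𝒩 n) (σ P · m) (g n) :=
    fun P => hQ P n m
  have hθB : 0 ≤ θ m * B m n := (mul_pos (hθ m).1 (hB m n)).le
  have hθB_le : θ m * B m n ≤ C :=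
    hC ▸ le_sup' (fun q : Fin (M + 1) × Fin (N + 1) => θ q.1 * B q.1 q.2) (mem_univ (m, n))
  have hcard : ((𝒩 n).card : ℝ) ≤ D := mod_cast hD ▸ le_sup' (fun n => (𝒩 n).card) (mem_univ n)
  have hK : 0 ≤ K := (abs_nonneg _).trans (hPK n m)
  calc |Q P n m - Q Phat n m|
      = θ m * B m n * |randomSubsetExpectation (𝒩 n) (σ P · m) (g n) -
          randomSubsetExpectation (𝒩 n) (σ Phat · m) (g n)| := by
        rw [hQ_expect, hQ_expect, ← mul_sub, abs_mul, abs_of_nonneg hθB]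
    _ ≤ θ m * B m n * ∑ i ∈ 𝒩 n, |σ P i m - σ Phat i m| := by
        gcongr
        exact abs_randomSubsetExpectation_sub_le (fun i _ => hσ_mem P i) (fun i _ => hσ_mem Phat i)
          fun S hS => ⟨(hg n S hS).1.le, (hg n S hS).2.le⟩
    _ ≤ θ m * B m n * ((𝒩 n).card * (2 * γ * K)) := by
        rw [← nsmul_eq_mul, ← sum_const]
        gcongr with i
        exact hσ_lip i
    _ ≤ C * (D * (2 * γ * K)) := by gcongr; exact hθB.trans hθB_le
    _ = 2 * γ * C * D * K := by ring

/-- Contraction property of the expected-payoff map of the distributed learning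
algorithm: if `γ < 1/(2·max_{m,n} θ_m B_m^n · max_n |𝒩_n|)` (and the maximum
in-degree is at least 1), then `Q` is a maximum-norm contraction with contraction
constant `2γ·max_{m,n} θ_m B_m^n · max_n |𝒩_n| < 1`. -/
theorem stmt_14 (N M : ℕ) (γ : ℝ) (hγ : 0 < γ)
    (𝒩 : Fin (N + 1) → Finset (Fin (N + 1)))
    (hself : ∀ n, n ∉ 𝒩 n)
    (θ : Fin (M + 1) → ℝ) (hθ : ∀ m, 0 < θ m ∧ θ m < 1)
    (B : Fin (M + 1) → Fin (N + 1) → ℝ) (hB : ∀ m n, 0 < B m n)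
    (g : Fin (N + 1) → Finset (Fin (N + 1)) → ℝ)
    (hg : ∀ n S, S ⊆ 𝒩 n → 0 < g n S ∧ g n S < 1)
    -- Boltzmann mixed strategies generated from perceptions:
    (σ : (Fin (N + 1) → Fin (M + 1) → ℝ) → Fin (N + 1) → Fin (M + 1) → ℝ)
    (hσ : ∀ P i m, σ P i m = Real.exp (γ * P i m) / ∑ m', Real.exp (γ * P i m'))
    -- expected payoff of player n choosing channel m given perceptions P:
    (Q : (Fin (N + 1) → Fin (M + 1) → ℝ) → Fin (N + 1) → Fin (M + 1) → ℝ)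
    (hQ : ∀ P n m, Q P n m = θ m * B m n * ∑ S ∈ (𝒩 n).powerset,
      g n S * (∏ i ∈ S, σ P i m) * ∏ i ∈ 𝒩 n \ S, (1 - σ P i m))
    -- the maxima:
    (C : ℝ) (hC : C = Finset.univ.sup' Finset.univ_nonempty
      (fun q : Fin (M + 1) × Fin (N + 1) => θ q.1 * B q.1 q.2))
    (D : ℕ) (hD : D = Finset.univ.sup' Finset.univ_nonempty (fun n => (𝒩 n).card))
    (hD1 : 1 ≤ D)
    (hγlt : γ < 1 / (2 * C * (D : ℝ))) :
    2 * γ * C * (D : ℝ) < 1 ∧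
    ∀ P Phat : Fin (N + 1) → Fin (M + 1) → ℝ, ∀ (n : Fin (N + 1)) (m : Fin (M + 1)),
      |Q P n m - Q Phat n m| ≤ 2 * γ * C * (D : ℝ) *
        Finset.univ.sup' Finset.univ_nonempty
          (fun q : Fin (N + 1) × Fin (M + 1) => |P q.1 q.2 - Phat q.1 q.2|) :=
  stmt_14_general N M γ hγ 𝒩 θ hθ B hB g hg σ hσ Q hQ C hC D hD hγlt
end

section
/- Consider an N-player finite game with common strategy set ℳ and payoffs U_n : ℳ^N → ℝ, and fix γ > 0. Suppose σ* = (σ*_1,…,σ*_N) is a mixed strategy profile such that for every player n and strategy m ∈ ℳ, σ*_m^n = exp(γ·Q_m^n(σ*)) / Σ_{m'∈ℳ} exp(γ·Q_{m'}^n(σ*)), where Q_m^n(σ*) is player n's expected payoff when n plays m and every other player i randomizes according to σ*_i. Then σ* is a δ-approximate Nash equilibrium with δ = max_{n∈𝒩} { −(1/γ)·Σ_{m∈ℳ} σ*_m^n·ln σ*_m^n }: for every player n and every mixed strategy σ_n of player n, U_n(σ_n, σ*_{−n}) ≤ U_n(σ*_n, σ*_{−n}) + δ. -/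
/-!
Against the others' mixed strategies, player `n`'s payoff is linear in its own mixed strategy:
`U_n(ρ, σ*₋ₙ) = Σₘ ρₘ Qₘⁿ`. At a softmax fixed point `γ Qₘⁿ = log σ*ₘⁿ + log Zₙ`, where
`Zₙ = Σₘ exp (γ Qₘⁿ)`, and `log σ*ₘⁿ ≤ 0`. So for any mixed `ρ` we get
`γ U_n(ρ, σ*₋ₙ) = Σₘ ρₘ log σ*ₘⁿ + log Zₙ ≤ log Zₙ`, while for `ρ = σ*ₙ` the same identity gives
`γ U_n(σ*) = Σₘ σ*ₘⁿ log σ*ₘⁿ + log Zₙ`. The gap is therefore at most the entropy of `σ*ₙ`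
divided by `γ`.
-/

open Finset Function Real

section MixedExtension

variable {ι α R : Type*} [Fintype ι] [DecidableEq ι] [CommSemiring R]

theorem prod_update_apply (σ : ι → α → R) (n : ι) (ρ : α → R) (a : ι → α) :
    ∏ i, update σ n ρ i (a i) = ρ (a n) * ∏ i ∈ univ.erase n, σ i (a i) := by
  rw [← mul_prod_erase univ _ (mem_univ n), update_self]
  congr 1
  exact prod_congr rfl fun i hi => by rw [update_of_ne (ne_of_mem_erase hi)]

theorem sum_prod_update_mul_eq_sum_mul_pure [Fintype α] [DecidableEq α] (σ : ι → α → R)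
    (f : (ι → α) → R) (n : ι) (ρ : α → R) :
    ∑ a, (∏ i, update σ n ρ i (a i)) * f a =
      ∑ m, ρ m * ∑ a, (∏ i, update σ n (fun m' => if m' = m then 1 else 0) i (a i)) * f a := by
  simp_rw [prod_update_apply, mul_sum, ← mul_assoc, mul_ite, mul_one, mul_zero, ite_mul, zero_mul]
  rw [sum_comm]
  refine sum_congr rfl fun a _ => ?_
  rw [sum_ite_eq]
  simp

end MixedExtension

section Softmax

variable {α : Type*} [Fintype α] [Nonempty α]

theorem sum_exp_mul_pos (γ : ℝ) (q : α → ℝ) : 0 < ∑ m, exp (γ * q m) :=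
  sum_pos (fun _ _ => exp_pos _) univ_nonempty

theorem mul_le_log_sum_exp (γ : ℝ) (q : α → ℝ) (m : α) :
    γ * q m ≤ log (∑ m', exp (γ * q m')) := by
  rw [← exp_le_exp, exp_log (sum_exp_mul_pos γ q)]
  exact single_le_sum (f := fun m' => exp (γ * q m')) (fun _ _ => (exp_pos _).le) (mem_univ m)

theorem log_softmax (γ : ℝ) (q : α → ℝ) (m : α) :
    log (exp (γ * q m) / ∑ m', exp (γ * q m')) = γ * q m - log (∑ m', exp (γ * q m')) := by
  rw [log_div (exp_ne_zero _) (sum_exp_mul_pos γ q).ne', log_exp]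

theorem sum_softmax (γ : ℝ) (q : α → ℝ) :
    ∑ m, exp (γ * q m) / ∑ m', exp (γ * q m') = 1 := by
  rw [← sum_div, div_self (sum_exp_mul_pos γ q).ne']

theorem sum_mul_le_sum_softmax_mul_add_entropy {γ : ℝ} (hγ : 0 < γ) {q s τ : α → ℝ}
    (hs : ∀ m, s m = exp (γ * q m) / ∑ m', exp (γ * q m'))
    (hτ0 : ∀ m, 0 ≤ τ m) (hτ1 : ∑ m, τ m = 1) :
    ∑ m, τ m * q m ≤ ∑ m, s m * q m + -(1 / γ) * ∑ m, s m * log (s m) := by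
  set L := log (∑ m', exp (γ * q m'))
  have hτ : γ * ∑ m, τ m * q m ≤ L := calc
    γ * ∑ m, τ m * q m = ∑ m, τ m * (γ * q m) := by rw [mul_sum]; congr! 1; ring
    _ ≤ ∑ m, τ m * L :=
      sum_le_sum fun m _ => mul_le_mul_of_nonneg_left (mul_le_log_sum_exp γ q m) (hτ0 m)
    _ = L := by rw [← sum_mul, hτ1, one_mul]
  have hs1 : ∑ m, s m = 1 := by simp_rw [hs]; exact sum_softmax γ q
  have hs' : γ * ∑ m, s m * q m = ∑ m, s m * log (s m) + L := calc
    γ * ∑ m, s m * q m = ∑ m, s m * (log (s m) + L) := by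
      rw [mul_sum]
      refine sum_congr rfl fun m _ => ?_
      rw [hs m, log_softmax]
      ring
    _ = ∑ m, s m * log (s m) + L := by
      simp_rw [mul_add, sum_add_distrib, ← sum_mul, hs1, one_mul]
  rw [← mul_le_mul_iff_of_pos_left hγ, mul_add, hs']
  field_simp
  linarith

end Softmax

theorem stmt_15_general (N M : ℕ) (γ : ℝ) (hγ : 0 < γ)
    (U : (Fin (N + 1) → Fin (M + 1)) → Fin (N + 1) → ℝ)
    -- the mixed strategy profile σ*:
    (σ : Fin (N + 1) → Fin (M + 1) → ℝ)
    -- expected payoff of player n under an arbitrary mixed profile τ: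
    (Umix : (Fin (N + 1) → Fin (M + 1) → ℝ) → Fin (N + 1) → ℝ)
    (hUmix : ∀ τ n, Umix τ n =
      ∑ a : Fin (N + 1) → Fin (M + 1), (∏ i, τ i (a i)) * U a n)
    -- Q n m : expected payoff of player n playing m against σ*₋ₙ:
    (Q : Fin (N + 1) → Fin (M + 1) → ℝ)
    (hQ : ∀ n m, Q n m =
      Umix (Function.update σ n (fun m' => if m' = m then 1 else 0)) n)
    -- σ* is a softmax fixed point of its own expected payoffs:
    (hfix : ∀ n m, σ n m = Real.exp (γ * Q n m) / ∑ m', Real.exp (γ * Q n m'))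
    (δ : ℝ)
    (hδ : δ = Finset.univ.sup' Finset.univ_nonempty
      (fun n => -(1 / γ) * ∑ m, σ n m * Real.log (σ n m))) :
    -- then σ* is a δ-approximate Nash equilibrium:
    ∀ (n : Fin (N + 1)) (τ : Fin (M + 1) → ℝ),
      (∀ m, 0 ≤ τ m) → (∑ m, τ m = 1) →
      Umix (Function.update σ n τ) n ≤ Umix σ n + δ := by
  intro n τ hτ0 hτ1
  have hpayoff : ∀ ρ, Umix (update σ n ρ) n = ∑ m, ρ m * Q n m := fun ρ => by
    rw [hUmix, sum_prod_update_mul_eq_sum_mul_pure σ (fun a => U a n)]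
    simp_rw [hQ, hUmix]
  have hentropy : -(1 / γ) * ∑ m, σ n m * log (σ n m) ≤ δ :=
    hδ ▸ le_sup' (fun n => -(1 / γ) * ∑ m, σ n m * log (σ n m)) (mem_univ n)
  calc Umix (update σ n τ) n = ∑ m, τ m * Q n m := hpayoff τ
    _ ≤ ∑ m, σ n m * Q n m + -(1 / γ) * ∑ m, σ n m * log (σ n m) :=
      sum_mul_le_sum_softmax_mul_add_entropy hγ (hfix n) hτ0 hτ1
    _ ≤ Umix σ n + δ := by rw [← hpayoff, update_eq_self]; linarith

/-- A softmax (Boltzmann) fixed point of the expected payoffs is a δ-approximate mixed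
Nash equilibrium with `δ = maxₙ {−(1/γ)·Σₘ σ*ₘⁿ ln σ*ₘⁿ}` (the maximal weighted
entropy). -/
theorem stmt_15 (N M : ℕ) (γ : ℝ) (hγ : 0 < γ)
    (U : (Fin (N + 1) → Fin (M + 1)) → Fin (N + 1) → ℝ)
    -- the mixed strategy profile σ*:
    (σ : Fin (N + 1) → Fin (M + 1) → ℝ)
    (hσ0 : ∀ n m, 0 ≤ σ n m) (hσ1 : ∀ n, ∑ m, σ n m = 1)
    -- expected payoff of player n under an arbitrary mixed profile τ:
    (Umix : (Fin (N + 1) → Fin (M + 1) → ℝ) → Fin (N + 1) → ℝ)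
    (hUmix : ∀ τ n, Umix τ n =
      ∑ a : Fin (N + 1) → Fin (M + 1), (∏ i, τ i (a i)) * U a n)
    -- Q n m : expected payoff of player n playing m against σ*₋ₙ:
    (Q : Fin (N + 1) → Fin (M + 1) → ℝ)
    (hQ : ∀ n m, Q n m =
      Umix (Function.update σ n (fun m' => if m' = m then 1 else 0)) n)
    -- σ* is a softmax fixed point of its own expected payoffs:
    (hfix : ∀ n m, σ n m = Real.exp (γ * Q n m) / ∑ m', Real.exp (γ * Q n m'))
    (δ : ℝ)
    (hδ : δ = Finset.univ.sup' Finset.univ_nonempty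
      (fun n => -(1 / γ) * ∑ m, σ n m * Real.log (σ n m))) :
    -- then σ* is a δ-approximate Nash equilibrium:
    ∀ (n : Fin (N + 1)) (τ : Fin (M + 1) → ℝ),
      (∀ m, 0 ≤ τ m) → (∑ m, τ m = 1) →
      Umix (Function.update σ n τ) n ≤ Umix σ n + δ :=
  stmt_15_general N M γ hγ U σ Umix hUmix Q hQ hfix δ hδ
end
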